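/- arXiv:2412.03504 — 8 statements merged into one kernel-verified Lean document; each statement's English description precedes it below -/
import Mathlib

section
/- Let a, c ∈ ℕ (a, c ≥ 1) and b, d ∈ ℤ. If for every f ∈ 𝓜 one has liminf_{n→∞} |f(an+b) − f(cn+d)| = 0 (the liminf taken over n with an+b > 0 and cn+d > 0), then a = c. -/
/-!
Test the hypothesis on the completely multiplicative function `f n = n ^ (i t)`. Then
`|f (a n + b) - f (c n + d)| = |((a n + b) / (c n + d)) ^ (i t) - 1|`, and as the ratio tends to
`a / c` this tends to `|(a / c) ^ (i t) - 1|`. If `a ≠ c`, the choice `t = π / log (a / c)` makes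
`(a / c) ^ (i t) = -1`, so the differences tend to `2` instead of accumulating at `0`.
-/

open Filter Topology

/-- `f : ℕ → ℂ` is completely multiplicative with values on the unit circle. -/
def IsUnitCM (f : ℕ → ℂ) : Prop :=
  f 1 = 1 ∧ (∀ m n : ℕ, 1 ≤ m → 1 ≤ n → f (m * n) = f m * f n) ∧
    ∀ n : ℕ, 1 ≤ n → ‖f n‖ = 1

noncomputable def imagPow (t x : ℝ) : ℂ := Complex.exp (↑(t * Real.log x) * Complex.I)

lemma norm_imagPow (t x : ℝ) : ‖imagPow t x‖ = 1 :=
  Complex.norm_exp_ofReal_mul_I _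

lemma imagPow_mul (t : ℝ) {x y : ℝ} (hx : x ≠ 0) (hy : y ≠ 0) :
    imagPow t (x * y) = imagPow t x * imagPow t y := by
  rw [imagPow, imagPow, imagPow, ← Complex.exp_add, Real.log_mul hx hy]
  push_cast
  congr 1
  ring

lemma isUnitCM_imagPow (t : ℝ) : IsUnitCM (fun n : ℕ => imagPow t n) := by
  refine ⟨by simp [imagPow], fun m n hm hn => ?_, fun n _ => norm_imagPow t n⟩
  push_cast
  exact imagPow_mul t (by positivity) (by positivity)

lemma norm_imagPow_sub_imagPow (t : ℝ) {x y : ℝ} (hx : x ≠ 0) (hy : y ≠ 0) :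
    ‖imagPow t x - imagPow t y‖ = ‖imagPow t (x / y) - 1‖ := by
  conv_lhs => rw [← div_mul_cancel₀ x hy, imagPow_mul t (div_ne_zero hx hy) hy, ← sub_one_mul]
  rw [norm_mul, norm_imagPow, mul_one]

lemma imagPow_pi_div_log {r : ℝ} (hr : Real.log r ≠ 0) :
    imagPow (Real.pi / Real.log r) r = -1 := by
  rw [imagPow, div_mul_cancel₀ _ hr, Complex.exp_pi_mul_I]

lemma continuousAt_imagPow (t : ℝ) {x : ℝ} (hx : x ≠ 0) : ContinuousAt (imagPow t) x := by
  unfold imagPow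
  fun_prop (disch := exact hx)

lemma tendsto_affine_div_affine (a b c d : ℝ) (hc : c ≠ 0) :
    Tendsto (fun n : ℕ => (a * n + b) / (c * n + d)) atTop (𝓝 (a / c)) := by
  have hlim : Tendsto (fun n : ℕ => (a + b / n) / (c + d / n)) atTop (𝓝 ((a + 0) / (c + 0))) :=
    (tendsto_const_nhds.add (tendsto_const_div_atTop_nhds_zero_nat b)).div
      (tendsto_const_nhds.add (tendsto_const_div_atTop_nhds_zero_nat d)) (by simpa using hc)
  rw [add_zero, add_zero] at hlim
  refine hlim.congr' ?_
  filter_upwards [eventually_ne_atTop 0] with n hn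
  field_simp

theorem stmt2 (a c : ℕ) (ha : 1 ≤ a) (hc : 1 ≤ c) (b d : ℤ)
    (H : ∀ f : ℕ → ℂ, IsUnitCM f → ∀ ε : ℝ, 0 < ε → ∀ N : ℕ, ∃ n, N ≤ n ∧
      0 < (a : ℤ) * n + b ∧ 0 < (c : ℤ) * n + d ∧
      ‖f (((a : ℤ) * n + b).toNat) - f (((c : ℤ) * n + d).toNat)‖ < ε) :
    a = c := by
  by_contra hne
  have hc₀ : (c : ℝ) ≠ 0 := by positivity
  have hr : 0 < (a / c : ℝ) := by positivity
  have hlog : Real.log (a / c) ≠ 0 :=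
    Real.log_ne_zero_of_pos_of_ne_one hr fun h =>
      hne (by exact_mod_cast (div_eq_one_iff_eq hc₀).mp h)
  set t := Real.pi / Real.log (a / c)
  have hlim :
      Tendsto (fun n : ℕ => ‖imagPow t ((a * n + b) / (c * n + d)) - 1‖) atTop (𝓝 2) := by
    have := (((continuousAt_imagPow t hr.ne').tendsto.comp
      (tendsto_affine_div_affine a b c d hc₀)).sub_const 1).norm
    rwa [imagPow_pi_div_log hlog, show ‖(-1 : ℂ) - 1‖ = 2 by norm_num] at this
  obtain ⟨N, hN⟩ := eventually_atTop.mp (hlim.eventually (lt_mem_nhds one_lt_two))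
  obtain ⟨n, hnN, hX, hY, hclose⟩ :=
    H (fun n : ℕ => imagPow t n) (isUnitCM_imagPow t) 1 one_pos N
  have hXr : (((a : ℤ) * n + b).toNat : ℝ) = a * n + b := by
    exact_mod_cast Int.toNat_of_nonneg hX.le
  have hYr : (((c : ℤ) * n + d).toNat : ℝ) = c * n + d := by
    exact_mod_cast Int.toNat_of_nonneg hY.le
  rw [norm_imagPow_sub_imagPow t (by rw [hXr]; exact_mod_cast hX.ne')
    (by rw [hYr]; exact_mod_cast hY.ne'), hXr, hYr] at hclose
  exact (hN n hnN).not_gt hclose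
end

section
/- Let a ∈ ℕ (a ≥ 1) and b, d ∈ ℤ with gcd(a,b,d) = 1 and b ≠ d, and assume that a does not divide b·d. Then there exists f ∈ 𝓜 such that liminf_{n→∞} |f(an+b) − f(an+d)| > 0 (the liminf taken over n with an+b > 0 and an+d > 0). -/
open Topology in
lemma exists_pos_le_norm_sub_of_finite_range {α E : Type*} [NormedAddCommGroup E] {f : α → E}
    (hf : (Set.range f).Finite) : ∃ δ > 0, ∀ x y, f x ≠ f y → δ ≤ ‖f x - f y‖ := by
  set T : Set ℝ :=
    (fun uv : E × E ↦ ‖uv.1 - uv.2‖) '' (Set.range f ×ˢ Set.range f ∩ {uv | uv.1 ≠ uv.2})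
  have hT : ∀ᶠ δ in 𝓝[>] (0 : ℝ), ∀ r ∈ T, δ ≤ r := by
    refine (((hf.prod hf).inter_of_left _).image _).eventually_all.2 ?_
    rintro _ ⟨uv, ⟨-, huv⟩, rfl⟩
    exact nhdsWithin_le_nhds (eventually_le_nhds (norm_pos_iff.2 (sub_ne_zero.2 huv)))
  obtain ⟨δ, hδ, hδpos⟩ := (hT.and self_mem_nhdsWithin).exists
  exact ⟨δ, hδpos, fun x y hxy ↦ hδ _ ⟨(f x, f y), ⟨⟨⟨x, rfl⟩, ⟨y, rfl⟩⟩, hxy⟩, rfl⟩⟩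

lemma isUnit_intCast_of_not_dvd {p : ℕ} (hp : p.Prime) (K : ℕ) {y : ℤ} (hy : ¬ (p : ℤ) ∣ y) :
    IsUnit (y : ZMod (p ^ K)) := by
  rw [ZMod.coe_int_isUnit_iff_isCoprime, Nat.cast_pow]
  exact ((Nat.prime_iff_prime_int.1 hp).coprime_iff_not_dvd.2 hy).pow_left

noncomputable def padicTwist (p : ℕ) {N : ℕ} (χ : DirichletCharacter ℂ N) (ω : ℂ) (n : ℕ) : ℂ :=
  ω ^ n.factorization p * χ (ordCompl[p] n)

section padicTwist

variable {p N : ℕ} (χ : DirichletCharacter ℂ N) (ω : ℂ)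

lemma padicTwist_mul {m n : ℕ} (hm : m ≠ 0) (hn : n ≠ 0) :
    padicTwist p χ ω (m * n) = padicTwist p χ ω m * padicTwist p χ ω n := by
  rw [padicTwist, padicTwist, padicTwist, Nat.ordCompl_mul, Nat.cast_mul, map_mul,
    Nat.factorization_mul hm hn, Finsupp.add_apply, pow_add]
  ring

lemma padicTwist_pow_mul (hp : p.Prime) (k : ℕ) {m : ℕ} (hm : ¬ p ∣ m) :
    padicTwist p χ ω (p ^ k * m) = ω ^ k * χ m := by
  have hm0 : m ≠ 0 := by rintro rfl; exact hm (dvd_zero p)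
  rw [padicTwist_mul χ ω (pow_ne_zero k hp.ne_zero) hm0]
  simp [padicTwist, Nat.factorization_eq_zero_of_not_dvd hm, hp.factorization_self,
    Nat.div_self (pow_pos hp.pos k)]

lemma padicTwist_toNat (hp : p.Prime) {k : ℕ} {x y : ℤ} (hx : 0 < x) (hxy : x = p ^ k * y)
    (hy : ¬ (p : ℤ) ∣ y) : padicTwist p χ ω x.toNat = ω ^ k * χ y := by
  lift y to ℕ using (pos_of_mul_pos_right (hxy ▸ hx) (by positivity)).le
  have hx' : x.toNat = p ^ k * y := by rw [hxy]; exact_mod_cast Int.toNat_natCast _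
  rw [hx', padicTwist_pow_mul χ ω hp k (by exact_mod_cast hy), Int.cast_natCast]

lemma finite_range_padicTwist [NeZero N] (hω : IsOfFinOrder ω) :
    (Set.range (padicTwist p χ ω)).Finite := by
  refine (hω.finite_powers.image2 (· * ·) (Set.finite_range χ)).subset ?_
  rintro _ ⟨n, rfl⟩
  exact Set.mem_image2_of_mem ⟨_, rfl⟩ ⟨_, rfl⟩

lemma isUnitCM_padicTwist (hp : p.Prime) {K : ℕ} (χ : DirichletCharacter ℂ (p ^ K))
    (hω : ‖ω‖ = 1) :
    IsUnitCM (padicTwist p χ ω) := by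
  refine ⟨by simp [padicTwist], fun m n hm hn ↦ padicTwist_mul χ ω (by omega) (by omega),
    fun n hn ↦ ?_⟩
  have hu := isUnit_intCast_of_not_dvd hp K (y := ((ordCompl[p] n : ℕ) : ℤ))
    (by exact_mod_cast Nat.not_dvd_ordCompl hp (by omega))
  rw [Int.cast_natCast] at hu
  rw [padicTwist, norm_mul, norm_pow, hω, one_pow, one_mul, ← hu.unit_spec, χ.unit_norm_eq_one]

end padicTwist

lemma one_add_pow_of_mul_self_eq_zero {R : Type*} [CommRing R] {x : R} (hx : x * x = 0) (j : ℕ) :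
    (1 + x) ^ j = 1 + j * x := by
  induction j with
  | zero => simp
  | succ j ih => rw [pow_succ, ih]; push_cast; linear_combination (j : R) * hx

lemma ZMod.exists_pow_one_add_mul_eq {N : ℕ} [NeZero N] {x : ZMod N} (hx : x * x = 0)
    (s : (ZMod N)ˣ) : ∃ j : ℕ, (1 + x * s) ^ j = 1 + x := by
  refine ⟨(s⁻¹ : (ZMod N)ˣ).val.val, ?_⟩
  rw [one_add_pow_of_mul_self_eq_zero (by linear_combination (s : ZMod N) ^ 2 * hx),
    ZMod.natCast_zmod_val, mul_left_comm, Units.inv_mul, mul_one]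

lemma exists_dirichletCharacter_apply_ne_apply {N : ℕ} [NeZero N] {x y : ZMod N} (hx : IsUnit x)
    (hxy : x ≠ y) : ∃ χ : DirichletCharacter ℂ N, χ x ≠ χ y := by
  obtain ⟨u, rfl⟩ := hx
  obtain ⟨χ, hχ⟩ := DirichletCharacter.exists_apply_ne_one_of_hasEnoughRootsOfUnity ℂ
    (a := y * ((u⁻¹ : (ZMod N)ˣ) : ZMod N)) (fun h ↦ hxy (Units.mul_inv_eq_one.1 h).symm)
  refine ⟨χ, fun h ↦ hχ ?_⟩
  rw [map_mul, ← h, ← map_mul, Units.mul_inv, map_one]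

lemma exists_dirichletCharacter_one_add_ne_one {p k : ℕ} (hp : 1 < p) (hk : 1 ≤ k) :
    ∃ χ : DirichletCharacter ℂ (p ^ (k + 1)), ∀ s : (ZMod (p ^ (k + 1)))ˣ,
      χ (1 + p ^ k * s) ≠ 1 := by
  have : NeZero (p ^ (k + 1)) := ⟨by positivity⟩
  have hsq : ((p : ZMod (p ^ (k + 1))) ^ k) * (p ^ k) = 0 := by
    rw [← pow_add]
    exact_mod_cast (ZMod.natCast_eq_zero_iff _ _).2 (pow_dvd_pow p (by omega))
  have hne : (1 + (p : ZMod (p ^ (k + 1))) ^ k) ≠ 1 := by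
    rw [Ne, add_eq_left]
    exact_mod_cast (ZMod.natCast_eq_zero_iff _ _).not.2
      ((Nat.pow_dvd_pow_iff_le_right hp).not.2 (by omega))
  obtain ⟨χ, hχ⟩ := DirichletCharacter.exists_apply_ne_one_of_hasEnoughRootsOfUnity ℂ hne
  refine ⟨χ, fun s hs ↦ hχ ?_⟩
  obtain ⟨j, hj⟩ := ZMod.exists_pow_one_add_mul_eq hsq s
  rw [← hj, map_pow, hs, one_pow]

lemma exists_dirichletCharacter_apply_add_ne {p : ℕ} (hp : p.Prime) {A u v : ℤ}
    (hA : (p : ℤ) ∣ A) (hu : ¬ (p : ℤ) ∣ u) (huv : u ≠ v) :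
    ∃ K, ∃ χ : DirichletCharacter ℂ (p ^ K), ∀ n : ℤ, χ (A * n + u : ℤ) ≠ χ (A * n + v : ℤ) := by
  have hfin : FiniteMultiplicity (p : ℤ) (v - u) :=
    Int.finiteMultiplicity_iff.2 ⟨by simpa using hp.ne_one, sub_ne_zero.2 huv.symm⟩
  obtain ⟨c, hvu, hc⟩ := hfin.exists_eq_pow_mul_and_not_dvd
  rcases Nat.eq_zero_or_pos (multiplicity (p : ℤ) (v - u)) with hγ | hγ
  · have : NeZero (p ^ 1) := ⟨by simp [hp.ne_zero]⟩
    have hA0 : (A : ZMod (p ^ 1)) = 0 :=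
      (ZMod.intCast_zmod_eq_zero_iff_dvd _ _).2 (by simpa using hA)
    have hne : (u : ZMod (p ^ 1)) ≠ v := by
      rw [Ne, ZMod.intCast_eq_intCast_iff_dvd_sub, hvu, hγ]
      simpa using hc
    obtain ⟨χ, hχ⟩ :=
      exists_dirichletCharacter_apply_ne_apply (isUnit_intCast_of_not_dvd hp 1 hu) hne
    exact ⟨1, χ, fun n ↦ by simpa [hA0] using hχ⟩
  · set γ := multiplicity (p : ℤ) (v - u)
    obtain ⟨χ, hχ⟩ := exists_dirichletCharacter_one_add_ne_one hp.one_lt hγ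
    refine ⟨γ + 1, χ, fun n h ↦ ?_⟩
    obtain ⟨U, hU⟩ := isUnit_intCast_of_not_dvd hp (γ + 1) (y := A * n + u)
      (fun h ↦ hu ((dvd_add_right (hA.mul_right n)).1 h))
    obtain ⟨C, hC⟩ := isUnit_intCast_of_not_dvd hp (γ + 1) hc
    have hV : ((A * n + v : ℤ) : ZMod (p ^ (γ + 1))) = U * (1 + p ^ γ * ↑(C * U⁻¹)) := by
      rw [show A * n + v = A * n + u + p ^ γ * c by linear_combination hvu]
      rw [Int.cast_add, ← hU, Int.cast_mul, Int.cast_pow, Int.cast_natCast, ← hC, Units.val_mul]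
      linear_combination (-(p : ZMod (p ^ (γ + 1))) ^ γ * C) * U.mul_inv
    rw [hV, map_mul, ← hU] at h
    exact hχ _ ((mul_eq_left₀ (U.isUnit.map χ).ne_zero).1 h.symm)

lemma exists_prime_pow_multiplicity_succ_dvd {a : ℕ} {m : ℤ} (h : ¬ (a : ℤ) ∣ m) :
    ∃ p : ℕ, p.Prime ∧ (p : ℤ) ^ (multiplicity (p : ℤ) m + 1) ∣ a := by
  rw [Int.natCast_dvd, Nat.dvd_iff_prime_pow_dvd_dvd] at h
  push Not at h
  obtain ⟨p, k, hp, hka, hkm⟩ := h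
  refine ⟨p, hp, (pow_dvd_pow _ ?_).trans (by exact_mod_cast hka)⟩
  by_contra! hk
  exact hkm (Int.natCast_dvd.1 (by simpa using pow_dvd_of_le_multiplicity (Nat.le_of_lt_succ hk)))

lemma exists_isUnitCM_finite_range_forall_ne {a : ℕ} {b d : ℤ} (hbd : b ≠ d)
    (hnd : ¬ (a : ℤ) ∣ b * d) :
    ∃ f : ℕ → ℂ, IsUnitCM f ∧ (Set.range f).Finite ∧ ∀ n : ℕ, 0 < (a : ℤ) * n + b →
      0 < (a : ℤ) * n + d → f ((a : ℤ) * n + b).toNat ≠ f ((a : ℤ) * n + d).toNat := by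
  obtain ⟨p, hp, hpa⟩ := exists_prime_pow_multiplicity_succ_dvd hnd
  have hfin : ∀ {z : ℤ}, z ≠ 0 → FiniteMultiplicity (p : ℤ) z :=
    fun hz ↦ Int.finiteMultiplicity_iff.2 ⟨by simpa using hp.ne_one, hz⟩
  have hbd0 : b * d ≠ 0 := by rintro h; simp [h] at hnd
  rw [multiplicity_mul (Nat.prime_iff_prime_int.1 hp) (hfin hbd0)] at hpa
  obtain ⟨b₁, hb, hb₁⟩ := (hfin (left_ne_zero_of_mul hbd0)).exists_eq_pow_mul_and_not_dvd
  obtain ⟨d₁, hd, hd₁⟩ := (hfin (right_ne_zero_of_mul hbd0)).exists_eq_pow_mul_and_not_dvd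
  set β := multiplicity (p : ℤ) b
  set δ := multiplicity (p : ℤ) d
  obtain ⟨a₀, ha₀⟩ := hpa
  have hb_eq (n : ℕ) : (a : ℤ) * n + b = p ^ β * (p ^ (δ + 1) * a₀ * n + b₁) := by
    rw [ha₀, hb]; ring
  have hd_eq (n : ℕ) : (a : ℤ) * n + d = p ^ δ * (p ^ (β + 1) * a₀ * n + d₁) := by
    rw [ha₀, hd]; ring
  have hpA (j : ℕ) : (p : ℤ) ∣ p ^ (j + 1) * a₀ := (dvd_pow_self _ j.succ_ne_zero).mul_right _
  have hndvd (j : ℕ) {y : ℤ} (hy : ¬ (p : ℤ) ∣ y) (n : ℕ) :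
      ¬ (p : ℤ) ∣ p ^ (j + 1) * a₀ * n + y :=
    fun h ↦ hy ((dvd_add_right ((hpA j).mul_right _)).1 h)
  rcases eq_or_ne β δ with hβδ | hβδ
  · obtain ⟨K, χ, hχ⟩ := exists_dirichletCharacter_apply_add_ne hp (hpA β) hb₁ (v := d₁)
      (by rintro rfl; exact hbd (by rw [hb, hd, hβδ]))
    have : NeZero (p ^ K) := ⟨pow_ne_zero K hp.ne_zero⟩
    refine ⟨padicTwist p χ 1, isUnitCM_padicTwist 1 hp χ norm_one,
      finite_range_padicTwist χ 1 IsOfFinOrder.one, fun n hbn hdn ↦ ?_⟩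
    rw [padicTwist_toNat χ 1 hp hbn (hb_eq n) (hndvd δ hb₁ n),
      padicTwist_toNat χ 1 hp hdn (hd_eq n) (hndvd β hd₁ n), ← hβδ]
    simpa using hχ n
  · have hω := Complex.isPrimitiveRoot_exp (β + δ + 1) (by omega)
    refine ⟨padicTwist p (1 : DirichletCharacter ℂ (p ^ 0)) _,
      isUnitCM_padicTwist _ hp 1 (hω.norm'_eq_one (by omega)),
      finite_range_padicTwist 1 _ (hω.isOfFinOrder (by omega)), fun n hbn hdn ↦ ?_⟩
    rw [padicTwist_toNat _ _ hp hbn (hb_eq n) (hndvd δ hb₁ n),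
      padicTwist_toNat _ _ hp hdn (hd_eq n) (hndvd β hd₁ n),
      MulChar.one_apply (isUnit_intCast_of_not_dvd hp 0 (hndvd δ hb₁ n)),
      MulChar.one_apply (isUnit_intCast_of_not_dvd hp 0 (hndvd β hd₁ n)), mul_one, mul_one]
    exact mt (hω.pow_inj (by omega) (by omega)) hβδ

theorem stmt3_general (a : ℕ) (b d : ℤ)
    (hbd : b ≠ d) (hnd : ¬ ((a : ℤ) ∣ b * d)) :
    ∃ f : ℕ → ℂ, IsUnitCM f ∧ ∃ δ : ℝ, 0 < δ ∧ ∃ N : ℕ, ∀ n, N ≤ n →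
      0 < (a : ℤ) * n + b → 0 < (a : ℤ) * n + d →
      δ ≤ ‖f (((a : ℤ) * n + b).toNat) - f (((a : ℤ) * n + d).toNat)‖ := by
  obtain ⟨f, hf, hfin, hne⟩ := exists_isUnitCM_finite_range_forall_ne hbd hnd
  obtain ⟨δ, hδ, hle⟩ := exists_pos_le_norm_sub_of_finite_range hfin
  exact ⟨f, hf, δ, hδ, 0, fun n _ hb hd ↦ hle _ _ (hne n hb hd)⟩

theorem stmt3 (a : ℕ) (ha : 1 ≤ a) (b d : ℤ)
    (hgcd : Int.gcd (Int.gcd (a : ℤ) b : ℤ) d = 1)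
    (hbd : b ≠ d) (hnd : ¬ ((a : ℤ) ∣ b * d)) :
    ∃ f : ℕ → ℂ, IsUnitCM f ∧ ∃ δ : ℝ, 0 < δ ∧ ∃ N : ℕ, ∀ n, N ≤ n →
      0 < (a : ℤ) * n + b → 0 < (a : ℤ) * n + d →
      δ ≤ ‖f (((a : ℤ) * n + b).toNat) - f (((a : ℤ) * n + d).toNat)‖ :=
  stmt3_general a b d hbd hnd
end

section
/- There exist f, g ∈ 𝓜 such that liminf_{n→∞} |f(n+2) − g(n)| > 0. -/
open ZMod

theorem Finset.exists_pos_le_norm_sub {E : Type*} [NormedAddCommGroup E] (s : Finset E) :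
    ∃ δ > 0, ∀ x ∈ s, ∀ y ∈ s, x ≠ y → δ ≤ ‖x - y‖ := by
  classical
  let D : Finset ℝ := insert 1 (((s ×ˢ s).filter fun p => p.1 ≠ p.2).image fun p => ‖p.1 - p.2‖)
  refine ⟨D.min' (insert_nonempty _ _), ?_, fun x hx y hy hxy => D.min'_le _ ?_⟩
  · simp only [gt_iff_lt, lt_min'_iff, D, mem_insert, mem_image, mem_filter, mem_product]
    rintro _ (rfl | ⟨p, ⟨-, hp⟩, rfl⟩)
    · exact one_pos
    · exact norm_sub_pos_iff.mpr hp
  · exact mem_insert_of_mem <|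
      mem_image.mpr ⟨(x, y), mem_filter.mpr ⟨mem_product.mpr ⟨hx, hy⟩, hxy⟩, rfl⟩

theorem χ₄_nat_add_two (n : ℕ) : χ₄ (n + 2 : ℕ) = -χ₄ n := by
  push_cast
  generalize (n : ZMod 4) = x
  revert x
  decide

theorem χ₄_nat_sq_of_odd {m : ℕ} (hm : Odd m) : ((χ₄ m : ℤ) : ℂ) ^ 2 = 1 := by
  have hm2 := Nat.odd_iff.mp hm
  rw [χ₄_nat_eq_if_mod_four]
  split_ifs <;> norm_num
  omega

theorem χ₄_ordCompl_two_sq {n : ℕ} (hn : n ≠ 0) : ((χ₄ (ordCompl[2] n : ℕ) : ℤ) : ℂ) ^ 2 = 1 :=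
  χ₄_nat_sq_of_odd <| Nat.odd_iff.mpr <| Nat.two_dvd_ne_zero.mp <|
    Nat.not_dvd_ordCompl Nat.prime_two hn

noncomputable def chi4Twist (a : ℂ) (n : ℕ) : ℂ :=
  ((χ₄ (ordCompl[2] n : ℕ) : ℤ) : ℂ) * a ^ n.factorization 2

namespace chi4Twist

variable {a : ℂ}

theorem map_one : chi4Twist a 1 = 1 := by
  simp [chi4Twist]

theorem map_mul {m n : ℕ} (hm : m ≠ 0) (hn : n ≠ 0) :
    chi4Twist a (m * n) = chi4Twist a m * chi4Twist a n := by
  unfold chi4Twist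
  rw [Nat.ordCompl_mul, Nat.cast_mul, _root_.map_mul, Int.cast_mul, Nat.factorization_mul hm hn,
    Finsupp.add_apply, pow_add]
  ring

theorem of_odd {n : ℕ} (hn : Odd n) : chi4Twist a n = χ₄ n := by
  have h : n.factorization 2 = 0 :=
    Nat.factorization_eq_zero_of_not_dvd hn.not_two_dvd_nat
  simp [chi4Twist, h]

theorem map_two : chi4Twist a 2 = a := by
  simp [chi4Twist, Nat.prime_two.factorization_self]

theorem two_mul_of_odd {m : ℕ} (hm : Odd m) : chi4Twist a (2 * m) = χ₄ m * a := by
  rw [map_mul two_ne_zero (by rintro rfl; simp at hm), map_two, of_odd hm, mul_comm]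

theorem pow_eq_one {k n : ℕ} (hk : Even k) (ha : a ^ k = 1) (hn : n ≠ 0) :
    chi4Twist a n ^ k = 1 := by
  obtain ⟨j, rfl⟩ := hk.two_dvd
  rw [chi4Twist, mul_pow, pow_mul, χ₄_ordCompl_two_sq hn, one_pow, one_mul, ← pow_mul,
    mul_comm, pow_mul, ha, one_pow]

theorem isUnitCM (ha : ‖a‖ = 1) : IsUnitCM (chi4Twist a) := by
  refine ⟨map_one, fun m n hm hn => map_mul (by omega) (by omega), fun n hn => ?_⟩
  rw [chi4Twist, norm_mul, norm_pow, ha, one_pow, mul_one,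
    Complex.norm_eq_one_of_pow_eq_one (χ₄_ordCompl_two_sq (by omega)) two_ne_zero]

end chi4Twist

theorem chi4Twist_add_two_ne_of_odd {a b : ℂ} {n : ℕ} (hn : Odd n) :
    chi4Twist a (n + 2) ≠ chi4Twist b n := by
  rw [chi4Twist.of_odd hn, chi4Twist.of_odd (hn.add_even even_two), χ₄_nat_add_two, Int.cast_neg,
    ne_eq, neg_eq_iff_add_eq_zero, ← two_mul, mul_eq_zero, not_or]
  refine ⟨two_ne_zero, fun h => ?_⟩
  have h_sq := χ₄_nat_sq_of_odd hn
  rw [h] at h_sq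
  norm_num at h_sq

theorem IsPrimitiveRoot.sq_eq_neg_one_of_four {ι : ℂ} (hι : IsPrimitiveRoot ι 4) : ι ^ 2 = -1 :=
  (hι.pow_of_dvd two_ne_zero (by norm_num)).eq_neg_one_of_two_right

theorem chi4Twist_add_two_ne {ω ι : ℂ} (hω : IsPrimitiveRoot ω 3) (hι : IsPrimitiveRoot ι 4)
    {n : ℕ} (hn : n ≠ 0) : chi4Twist ω (n + 2) ≠ chi4Twist ι n := by
  rcases n.even_or_odd with ⟨k, rfl⟩ | hodd
  · rcases k.even_or_odd with ⟨j, rfl⟩ | hk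
    · intro h
      apply hω.ne_one (by norm_num)
      have hodd : Odd (2 * j + 1) := odd_two_mul_add_one j
      calc ω = ((χ₄ (2 * j + 1 : ℕ) : ℂ) ^ 2) ^ 2 * (ω ^ 3 * ω) := by
            rw [χ₄_nat_sq_of_odd hodd, hω.pow_eq_one]
            ring
        _ = chi4Twist ω (j + j + (j + j) + 2) ^ 4 := by
            rw [show j + j + (j + j) + 2 = 2 * (2 * j + 1) by ring, chi4Twist.two_mul_of_odd hodd]
            ring
        _ = 1 := by rw [h]; exact chi4Twist.pow_eq_one (by decide) hι.pow_eq_one hn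
    · intro h
      have hf : chi4Twist ω (k + k + 2) ^ 6 = 1 :=
        chi4Twist.pow_eq_one (by decide)
          (by rw [show 6 = 3 * 2 by rfl, pow_mul, hω.pow_eq_one, one_pow]) (by omega)
      have hg : chi4Twist ι (k + k) ^ 6 = -1 := by
        rw [← two_mul, chi4Twist.two_mul_of_odd hk, mul_pow, show 6 = 2 * 3 by rfl, pow_mul,
          pow_mul, χ₄_nat_sq_of_odd hk, hι.sq_eq_neg_one_of_four]
        norm_num
      rw [h, hg] at hf
      norm_num at hf
  · exact chi4Twist_add_two_ne_of_odd hodd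

theorem stmt5 :
    ∃ f g : ℕ → ℂ, IsUnitCM f ∧ IsUnitCM g ∧
      ∃ δ : ℝ, 0 < δ ∧ ∃ N : ℕ, ∀ n, N ≤ n → 1 ≤ n →
        δ ≤ ‖f (n + 2) - g n‖ := by
  obtain ⟨ω, hω⟩ : ∃ ω : ℂ, IsPrimitiveRoot ω 3 := ⟨_, Complex.isPrimitiveRoot_exp 3 (by norm_num)⟩
  have hω12 : ω ^ 12 = 1 := by rw [show 12 = 3 * 4 by rfl, pow_mul, hω.pow_eq_one, one_pow]
  have hI12 : Complex.I ^ 12 = 1 := by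
    rw [show 12 = 4 * 3 by rfl, pow_mul, Complex.I_pow_four, one_pow]
  have mem_roots {a : ℂ} (ha : a ^ 12 = 1) {n : ℕ} (hn : n ≠ 0) :
      chi4Twist a n ∈ Polynomial.nthRootsFinset 12 (1 : ℂ) :=
    (Polynomial.mem_nthRootsFinset (by norm_num) 1).mpr (chi4Twist.pow_eq_one (by decide) ha hn)
  obtain ⟨δ, hδ, hsep⟩ := (Polynomial.nthRootsFinset 12 (1 : ℂ)).exists_pos_le_norm_sub
  refine ⟨chi4Twist ω, chi4Twist Complex.I,
    chi4Twist.isUnitCM (Complex.norm_eq_one_of_pow_eq_one hω.pow_eq_one three_ne_zero),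
    chi4Twist.isUnitCM Complex.norm_I, δ, hδ, 0, fun n _ hn => ?_⟩
  exact hsep _ (mem_roots hω12 (by omega)) _ (mem_roots hI12 (by omega))
    (chi4Twist_add_two_ne hω Complex.isPrimitiveRoot_I (by omega))
end

section
/- Let a ∈ ℕ (a ≥ 1) and b, d ∈ ℤ with gcd(a,b,d) = 1, and suppose that b = d or a ∣ b·d. Let (X, 𝒳, μ, (T_n)_{n∈ℕ}) be a finitely generated multiplicative measure-preserving system. Then for every A ∈ 𝒳 with μ(A) > 0 there exist infinitely many n ∈ ℕ with an+b > 0, an+d > 0 and μ(T_{an+b}^{-1}A ∩ T_{an+d}^{-1}A) > 0. -/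
/-!
Write `a = α β` with `α ∣ b`, `β ∣ d` and `α, β` coprime, and let `c = d - b > 0`. If `α ∣ x` and
`β ∣ x + 1`, then `(c x, c (x + 1)) = (a n + b, a n + d)` for some `n`. Multiplicativity makes
`μ(T_{mk}⁻¹A ∩ T_{nk}⁻¹A)` independent of `k`, so it suffices to find such an `x` and some `S`
with `μ(T_{xS}⁻¹A ∩ T_{(x+1)S}⁻¹A) > 0`.

To this end we build, for every `K`, integers `v_0 < ⋯ < v_K` such that every pair `(v_i, v_j)`,
`i < j`, is of the form `(x S, (x + 1) S)` with `α ∣ x` and `β ∣ x + 1`; once `K μ(A) > 1`, two of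
the sets `T_{v_i}⁻¹A` meet in positive measure. The chain is `v_i = W + α^(K-i) f_i`, with `f`
built by induction on `K` and `W` by the Chinese remainder theorem. Replacing `α` by a large
multiple of it that is still coprime to `β` makes `x`, hence `n`, arbitrarily large.
-/

open MeasureTheory

theorem exists_coprime_mul_eq_of_dvd_mul {a : ℕ} (ha : 0 < a) {b d : ℤ}
    (hgcd : Int.gcd (Int.gcd (a : ℤ) b : ℤ) d = 1) (habd : (a : ℤ) ∣ b * d) :
    ∃ α β : ℕ, α * β = a ∧ α.Coprime β ∧ (α : ℤ) ∣ b ∧ (β : ℤ) ∣ d := by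
  obtain ⟨g, a', b', hg, hab', ha', hb'⟩ :=
    Int.exists_gcd_one' (Int.gcd_pos_of_ne_zero_left b (Int.natCast_ne_zero.2 ha.ne'))
  obtain ⟨β, rfl⟩ : ∃ β : ℕ, a' = β := Int.eq_ofNat_of_zero_le <|
    nonneg_of_mul_nonneg_left (ha' ▸ Int.natCast_nonneg a) (Int.natCast_pos.2 hg)
  have hβd : (β : ℤ) ∣ d := by
    rw [ha', hb', mul_right_comm] at habd
    exact (Int.isCoprime_iff_gcd_eq_one.2 hab').dvd_of_dvd_mul_left
      ((mul_dvd_mul_iff_right (Int.natCast_ne_zero.2 hg.ne')).1 habd)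
  refine ⟨g, β, by rw [mul_comm]; exact_mod_cast ha'.symm, ?_, ⟨b', by rw [hb', mul_comm]⟩, hβd⟩
  have hdvd : Int.gcd g β ∣ Int.gcd (Int.gcd (a : ℤ) b : ℤ) d := by
    refine Int.dvd_gcd (Int.dvd_coe_gcd ?_ ?_) ((Int.gcd_dvd_right _ _).trans hβd)
    · rw [ha']; exact (Int.gcd_dvd_left _ _).mul_left _
    · rw [hb']; exact (Int.gcd_dvd_left _ _).mul_left _
  rw [hgcd, Nat.dvd_one] at hdvd
  exact Nat.isCoprime_iff_coprime.1 (Int.isCoprime_iff_gcd_eq_one.2 hdvd)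

theorem dvd_mul_sub_of_dvd {α β c x : ℕ} {b : ℤ} (hαβ : α.Coprime β) (hαb : (α : ℤ) ∣ b)
    (hβd : (β : ℤ) ∣ b + c) (hαx : α ∣ x) (hβx : β ∣ x + 1) :
    ((α * β : ℕ) : ℤ) ∣ c * x - b := by
  push_cast
  refine (Nat.isCoprime_iff_coprime.2 hαβ).mul_dvd ?_ ?_
  · exact dvd_sub (dvd_mul_of_dvd_right (Int.natCast_dvd_natCast.2 hαx) _) hαb
  · rw [show (c : ℤ) * x - b = c * (x + 1) - (b + c) by ring]
    exact dvd_sub (dvd_mul_of_dvd_right (by exact_mod_cast hβx) _) hβd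

theorem exists_pos_dvd_and_dvd_add {m n : ℕ} (hmn : m.Coprime n) (hm : 0 < m) (hn : 0 < n)
    (r : ℕ) : ∃ W, 0 < W ∧ m ∣ W ∧ n ∣ W + r := by
  obtain ⟨y, -, hy⟩ := Nat.exists_mul_mod_eq_of_coprime ((n - 1) * r) hmn hn.ne'
  have hyr : m * y + r ≡ 0 [MOD n] := calc
    m * y + r ≡ (n - 1) * r + r [MOD n] := Nat.ModEq.add_right r hy
    _ = n * r := by rw [← add_one_mul, Nat.sub_one_add_one hn.ne']
    _ ≡ 0 [MOD n] := (Nat.modEq_zero_iff_dvd).2 (dvd_mul_right n r)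
  refine ⟨m * (y + n), by positivity, dvd_mul_right m _, ?_⟩
  rw [mul_add, add_right_comm]
  exact dvd_add ((Nat.modEq_zero_iff_dvd).1 hyr) (dvd_mul_left n m)

theorem pow_mul_pow_mul_dvd_of_coprime {α β E n a b : ℕ} (hαβ : α.Coprime β)
    (hE : E.Coprime (α * β)) (ha : α ^ a ∣ n) (hb : β ^ b ∣ n) (hEn : E ∣ n) :
    α ^ a * β ^ b * E ∣ n :=
  have hEαβ : (α ^ a * β ^ b).Coprime E :=
    Nat.Coprime.mul_left (hE.coprime_mul_right_right.symm.pow_left a)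
      (hE.coprime_mul_left_right.symm.pow_left b)
  hEαβ.mul_dvd_of_dvd_of_dvd ((hαβ.pow a b).mul_dvd_of_dvd_of_dvd ha hb) hEn

def IsScaledSuccPair (α β u v : ℕ) : Prop :=
  ∃ x S, 0 < S ∧ u = x * S ∧ v = (x + 1) * S ∧ α ∣ x ∧ β ∣ x + 1

theorem isScaledSuccPair_of_dvd {α β u S : ℕ} (hS : 0 < S) (hu : α * S ∣ u)
    (hv : β * S ∣ u + S) : IsScaledSuccPair α β u (u + S) := by
  obtain ⟨y, rfl⟩ := hu
  refine ⟨α * y, S, hS, by ring, by ring, dvd_mul_right α y, Nat.dvd_of_mul_dvd_mul_right hS ?_⟩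
  convert hv using 1
  ring

/-- In the chain `v i = W + α ^ (K - i) * f i` of `exists_scaledSuccPair_chain` this gives
`v j - v i = α ^ (K - j) * β ^ i * E`, where `E` divides `v i` as soon as `P ∣ W`. -/
def IsChainShape (α β P : ℕ) (f : ℕ → ℕ) (K : ℕ) : Prop :=
  0 < P ∧ P.Coprime (α * β) ∧ f 0 = 0 ∧
    ∀ i j, i < j → j ≤ K → ∃ E, 0 < E ∧ E ∣ P ∧ E ∣ f i ∧ f j = α ^ (j - i) * f i + β ^ i * E

def chainShapeSucc (α β P : ℕ) (f : ℕ → ℕ) : ℕ → ℕ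
  | 0 => 0
  | i + 1 => α ^ i * P + β * f i

namespace IsChainShape

variable {α β P K : ℕ} {f : ℕ → ℕ}

theorem coprime_chainShapeSucc (h : IsChainShape α β P f K) (hαβ : α.Coprime β) {i : ℕ}
    (hi : i ≤ K) : (chainShapeSucc α β P f (i + 1)).Coprime (α * β) := by
  obtain ⟨-, hPαβ, hf0, hf⟩ := h
  refine Nat.Coprime.mul_right ?_ ?_
  · rcases Nat.eq_zero_or_pos i with rfl | hi0
    · simpa [chainShapeSucc, hf0] using hPαβ.coprime_mul_right_right
    · obtain ⟨E, -, hEP, -, hfi⟩ := hf 0 i hi0 hi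
      simp only [hf0, mul_zero, zero_add, pow_zero, one_mul] at hfi
      have hEα : E.Coprime α := (hPαβ.coprime_dvd_left hEP).coprime_mul_right_right
      rw [chainShapeSucc, hfi, ← Nat.sub_one_add_one hi0.ne', pow_succ', add_comm, mul_assoc,
        Nat.coprime_add_mul_left_left]
      exact hαβ.symm.mul_left hEα
  · rw [chainShapeSucc, Nat.coprime_add_mul_left_left]
    exact (hαβ.pow_left i).mul_left hPαβ.coprime_mul_left_right

theorem succ (h : IsChainShape α β P f K) (hα : 0 < α) (hαβ : α.Coprime β) :
    IsChainShape α β (P * ∏ i ∈ Finset.range (K + 1), chainShapeSucc α β P f (i + 1))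
      (chainShapeSucc α β P f) (K + 1) := by
  have hcop : ∀ i ∈ Finset.range (K + 1), (chainShapeSucc α β P f (i + 1)).Coprime (α * β) :=
    fun i hi ↦ h.coprime_chainShapeSucc hαβ (Nat.lt_succ_iff.1 (Finset.mem_range.1 hi))
  obtain ⟨hP, hPαβ, -, hf⟩ := h
  have hpos : ∀ i, 0 < chainShapeSucc α β P f (i + 1) := fun i ↦
    Nat.add_pos_left (by positivity) _
  refine ⟨Nat.mul_pos hP (Finset.prod_pos fun i _ ↦ hpos i),
    hPαβ.mul_left (Nat.Coprime.prod_left hcop), rfl, fun i j hij hj ↦ ?_⟩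
  obtain ⟨j, rfl⟩ : ∃ j', j = j' + 1 := ⟨j - 1, by omega⟩
  rcases i with _ | i
  · refine ⟨_, hpos j, dvd_mul_of_dvd_right ?_ P, dvd_zero _, by simp [chainShapeSucc]⟩
    exact Finset.dvd_prod_of_mem _ (Finset.mem_range.2 (by omega))
  · obtain ⟨E, hE, hEP, hEfi, hfj⟩ := hf i j (by omega) (by omega)
    refine ⟨E, hE, hEP.mul_right _, dvd_add (hEP.mul_left _) (hEfi.mul_left _), ?_⟩
    simp only [chainShapeSucc, Nat.add_sub_add_right]
    rw [hfj, ← Nat.sub_add_cancel (show i ≤ j by omega), pow_add, Nat.add_sub_cancel]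
    ring

end IsChainShape

theorem exists_isChainShape {α β : ℕ} (hα : 0 < α) (hαβ : α.Coprime β) (K : ℕ) :
    ∃ P f, IsChainShape α β P f K := by
  induction K with
  | zero => exact ⟨1, fun _ ↦ 0, one_pos, Nat.coprime_one_left _, rfl, fun i j hij hj ↦ by omega⟩
  | succ K ih =>
    obtain ⟨P, f, h⟩ := ih
    exact ⟨_, _, h.succ hα hαβ⟩

theorem exists_scaledSuccPair_chain {α β : ℕ} (hα : 0 < α) (hβ : 0 < β) (hαβ : α.Coprime β)
    (K : ℕ) : ∃ v : ℕ → ℕ, (∀ i ≤ K, 0 < v i) ∧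
      ∀ i j, i < j → j ≤ K → IsScaledSuccPair α β (v i) (v j) := by
  obtain ⟨P, f, hP, hPαβ, -, hf⟩ := exists_isChainShape hα hαβ K
  obtain ⟨W, hW, hαPW, hβW⟩ := exists_pos_dvd_and_dvd_add
    ((hαβ.pow K K).mul_left (hPαβ.coprime_mul_left_right.pow_right K)) (by positivity)
    (by positivity) (f K)
  set v : ℕ → ℕ := fun i ↦ W + α ^ (K - i) * f i
  have hv_succ : ∀ i j E, i ≤ j → j ≤ K → f j = α ^ (j - i) * f i + β ^ i * E →
      v j = v i + α ^ (K - j) * β ^ i * E := by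
    intro i j E hij hjK hfj
    simp only [v, hfj, mul_add, ← mul_assoc, ← pow_add, Nat.sub_add_sub_cancel hjK hij]
    ring
  have hαv : ∀ i, α ^ (K - i) ∣ v i := fun i ↦
    dvd_add ((pow_dvd_pow α (Nat.sub_le K i)).trans (dvd_of_mul_right_dvd hαPW))
      (dvd_mul_right _ _)
  have hβvK : β ^ K ∣ v K := by simpa [v] using hβW
  have hβv : ∀ i ≤ K, β ^ i ∣ v i := by
    intro i hi
    rcases hi.lt_or_eq with hi | rfl
    · obtain ⟨E, -, -, -, hfK⟩ := hf i K hi le_rfl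
      have hvK := hv_succ i K E hi.le le_rfl hfK
      rw [Nat.sub_self, pow_zero, one_mul] at hvK
      have : β ^ i ∣ v i + β ^ i * E := hvK ▸ (pow_dvd_pow β hi.le).trans hβvK
      exact (Nat.dvd_add_left (dvd_mul_right _ _)).1 this
    · exact hβvK
  refine ⟨v, fun i _ ↦ Nat.add_pos_left hW _, fun i j hij hjK ↦ ?_⟩
  obtain ⟨E, hE, hEP, hEfi, hfj⟩ := hf i j hij hjK
  have hEαβ : E.Coprime (α * β) := hPαβ.coprime_dvd_left hEP
  have hEvi : E ∣ v i := dvd_add (hEP.trans (dvd_of_mul_left_dvd hαPW)) (hEfi.mul_left _)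
  have hvj := hv_succ i j E hij.le hjK hfj
  rw [hvj]
  apply isScaledSuccPair_of_dvd (by positivity)
  · rw [show α * (α ^ (K - j) * β ^ i * E) = α ^ (K - j + 1) * β ^ i * E by ring]
    exact pow_mul_pow_mul_dvd_of_coprime hαβ hEαβ
      ((pow_dvd_pow α (by omega)).trans (hαv i)) (hβv i (by omega)) hEvi
  · rw [← hvj, show β * (α ^ (K - j) * β ^ i * E) = α ^ (K - j) * β ^ (i + 1) * E by ring]
    exact pow_mul_pow_mul_dvd_of_coprime hαβ hEαβ (hαv j)
      ((pow_dvd_pow β hij).trans (hβv j hjK)) (hvj ▸ dvd_add hEvi (dvd_mul_left E _))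

theorem MeasureTheory.exists_measure_inter_pos_of_measure_univ_lt_sum_measure {X ι : Type*}
    [MeasurableSpace X] [LinearOrder ι] {μ : Measure X} {s : Finset ι} {f : ι → Set X}
    (hf : ∀ i ∈ s, NullMeasurableSet (f i) μ) (h : μ Set.univ < ∑ i ∈ s, μ (f i)) :
    ∃ i ∈ s, ∃ j ∈ s, i < j ∧ 0 < μ (f i ∩ f j) := by
  by_contra! hnull
  have hdisj : (s : Set ι).Pairwise (Function.onFun (AEDisjoint μ) f) := by
    intro i hi j hj hij
    rcases hij.lt_or_gt with hij | hij
    · exact nonpos_iff_eq_zero.1 (hnull i hi j hj hij)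
    · exact AEDisjoint.symm (nonpos_iff_eq_zero.1 (hnull j hj i hi hij))
  exact (measure_biUnion_finset₀ hdisj hf ▸ measure_mono (Set.subset_univ _)).not_gt h

structure IsMultiplicativeSystem {X : Type*} [MeasurableSpace X] (μ : Measure X)
    (T : ℕ → X → X) : Prop where
  measurePreserving : ∀ n, 1 ≤ n → MeasurePreserving (T n) μ μ
  comp_ae : ∀ m n, 1 ≤ m → 1 ≤ n → ∀ᵐ x ∂μ, T n (T m x) = T (n * m) x

namespace IsMultiplicativeSystem

variable {X : Type*} [MeasurableSpace X] {μ : Measure X} {T : ℕ → X → X} {A : Set X}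

theorem measure_preimage_mul_inter (hT : IsMultiplicativeSystem μ T) (hA : MeasurableSet A)
    {k m n : ℕ} (hk : 1 ≤ k) (hm : 1 ≤ m) (hn : 1 ≤ n) :
    μ (T (m * k) ⁻¹' A ∩ T (n * k) ⁻¹' A) = μ (T m ⁻¹' A ∩ T n ⁻¹' A) := by
  have hcomp : ∀ l, 1 ≤ l → T (l * k) ⁻¹' A =ᵐ[μ] T k ⁻¹' (T l ⁻¹' A) := fun l hl ↦ by
    rw [Filter.eventuallyEq_set]
    filter_upwards [hT.comp_ae k l hk hl] with x hx
    simp only [Set.mem_preimage, hx]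
  rw [measure_congr ((hcomp m hm).inter (hcomp n hn)), ← Set.preimage_inter,
    (hT.measurePreserving k hk).measure_preimage]
  exact (((hT.measurePreserving m hm).measurable hA).inter
    ((hT.measurePreserving n hn).measurable hA)).nullMeasurableSet

theorem exists_measure_inter_preimage_succ_pos [IsFiniteMeasure μ]
    (hT : IsMultiplicativeSystem μ T) (hA : MeasurableSet A) (hApos : 0 < μ A) {α β : ℕ}
    (hα : 0 < α) (hβ : 0 < β) (hαβ : α.Coprime β) :
    ∃ x, 0 < x ∧ α ∣ x ∧ β ∣ x + 1 ∧ 0 < μ (T x ⁻¹' A ∩ T (x + 1) ⁻¹' A) := by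
  obtain ⟨K, hK⟩ := ENNReal.exists_nat_mul_gt hApos.ne' (measure_ne_top μ Set.univ)
  obtain ⟨v, hv_pos, hv⟩ := exists_scaledSuccPair_chain hα hβ hαβ K
  have hTv : ∀ i ∈ Finset.range K, MeasurePreserving (T (v i)) μ μ := fun i hi ↦
    hT.measurePreserving _ (hv_pos i (Finset.mem_range.1 hi).le)
  have hsum : μ Set.univ < ∑ i ∈ Finset.range K, μ (T (v i) ⁻¹' A) := by
    rwa [Finset.sum_congr rfl fun i hi ↦ (hTv i hi).measure_preimage hA.nullMeasurableSet,
      Finset.sum_const, Finset.card_range, nsmul_eq_mul]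
  obtain ⟨i, hi, j, hj, hij, hpos⟩ := exists_measure_inter_pos_of_measure_univ_lt_sum_measure
    (fun i hi ↦ ((hTv i hi).measurable hA).nullMeasurableSet) hsum
  obtain ⟨x, S, hS, hvi, hvj, hαx, hβx⟩ := hv i j hij (Finset.mem_range.1 hj).le
  have hx : 0 < x := Nat.pos_of_mul_pos_right (hvi ▸ hv_pos i (Finset.mem_range.1 hi).le)
  refine ⟨x, hx, hαx, hβx, ?_⟩
  rwa [hvi, hvj, hT.measure_preimage_mul_inter hA hS hx (Nat.succ_pos x)] at hpos

theorem exists_progression_of_lt [IsFiniteMeasure μ] (hT : IsMultiplicativeSystem μ T)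
    (hA : MeasurableSet A) (hApos : 0 < μ A) {a : ℕ} (ha : 0 < a) {b d : ℤ}
    (hgcd : Int.gcd (Int.gcd (a : ℤ) b : ℤ) d = 1) (habd : (a : ℤ) ∣ b * d) (hbd : b < d)
    (N : ℕ) : ∃ n : ℕ, N ≤ n ∧ 0 < (a : ℤ) * n + b ∧ 0 < (a : ℤ) * n + d ∧
      0 < μ (T (((a : ℤ) * n + b).toNat) ⁻¹' A ∩ T (((a : ℤ) * n + d).toNat) ⁻¹' A) := by
  obtain ⟨α, β, rfl, hαβ, hαb, hβd⟩ := exists_coprime_mul_eq_of_dvd_mul ha hgcd habd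
  obtain ⟨c, rfl⟩ : ∃ c : ℕ, d = b + c := ⟨(d - b).toNat, by omega⟩
  have hc : 0 < c := by omega
  have hα : 0 < α := Nat.pos_of_mul_pos_right ha
  have hβ : 0 < β := Nat.pos_of_mul_pos_left ha
  set M := α * β * N + b.natAbs
  obtain ⟨x, hx, hαx, hβx, hpos⟩ := hT.exists_measure_inter_preimage_succ_pos hA hApos
    (α := α * (M * β + 1)) (Nat.mul_pos hα (Nat.succ_pos _)) hβ
    (hαβ.mul_left ((Nat.coprime_mul_right_add_left 1 β M).2 (Nat.coprime_one_left β)))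
  have hMx : M < c * x := calc
    M < M * β + 1 := Nat.lt_succ_of_le (Nat.le_mul_of_pos_right M hβ)
    _ ≤ x := Nat.le_of_dvd hx (dvd_of_mul_left_dvd hαx)
    _ ≤ c * x := Nat.le_mul_of_pos_left x hc
  obtain ⟨k, hk⟩ := dvd_mul_sub_of_dvd hαβ hαb hβd (dvd_of_mul_right_dvd hαx) hβx
  push_cast at hk
  have hNk : (N : ℤ) ≤ k := by
    refine le_of_mul_le_mul_left ?_ (Int.natCast_pos.2 ha)
    have hMx' : (α * β * N + b.natAbs : ℤ) < c * x := by exact_mod_cast hMx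
    push_cast
    linarith [Int.le_natAbs (a := b)]
  lift k to ℕ using (Int.natCast_nonneg N).trans hNk
  have hb : ((α * β : ℕ) : ℤ) * k + b = (c * x : ℕ) := by push_cast; linarith
  have hd : ((α * β : ℕ) : ℤ) * k + (b + c) = (c * (x + 1) : ℕ) := by push_cast; linarith
  refine ⟨k, by exact_mod_cast hNk, ?_, ?_, ?_⟩
  · rw [hb]; positivity
  · rw [hd]; positivity
  · rwa [hb, hd, Int.toNat_natCast, Int.toNat_natCast, mul_comm c, mul_comm c,
      hT.measure_preimage_mul_inter hA hc hx (Nat.succ_pos x)]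

theorem exists_progression_of_eq (hT : IsMultiplicativeSystem μ T) (hA : MeasurableSet A)
    (hApos : 0 < μ A) {a : ℕ} (ha : 0 < a) (b : ℤ) (N : ℕ) :
    ∃ n : ℕ, N ≤ n ∧ 0 < (a : ℤ) * n + b ∧ 0 < (a : ℤ) * n + b ∧
      0 < μ (T (((a : ℤ) * n + b).toNat) ⁻¹' A ∩ T (((a : ℤ) * n + b).toNat) ⁻¹' A) := by
  have hpos : 0 < (a : ℤ) * (N + b.natAbs + 1 : ℕ) + b := by
    have : (1 : ℤ) ≤ a := by exact_mod_cast ha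
    push_cast
    nlinarith [neg_abs_le b, abs_nonneg b, Int.natCast_nonneg N]
  refine ⟨N + b.natAbs + 1, by omega, hpos, hpos, ?_⟩
  rwa [Set.inter_self, (hT.measurePreserving _ (by omega)).measure_preimage hA.nullMeasurableSet]

end IsMultiplicativeSystem

theorem stmt6_general {X : Type*} [MeasurableSpace X] (μ : Measure X)
    [IsProbabilityMeasure μ] (T : ℕ → X → X)
    (hmp : ∀ n : ℕ, 1 ≤ n → MeasurePreserving (T n) μ μ)
    (hmul : ∀ m n : ℕ, 1 ≤ m → 1 ≤ n → ∀ᵐ x ∂μ, T n (T m x) = T (n * m) x)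
    (a : ℕ) (ha : 1 ≤ a) (b d : ℤ)
    (hgcd : Int.gcd (Int.gcd (a : ℤ) b : ℤ) d = 1)
    (hbd : b = d ∨ (a : ℤ) ∣ b * d)
    (A : Set X) (hA : MeasurableSet A) (hApos : 0 < μ A) :
    ∀ N : ℕ, ∃ n, N ≤ n ∧ 0 < (a : ℤ) * n + b ∧ 0 < (a : ℤ) * n + d ∧
      0 < μ (T (((a : ℤ) * n + b).toNat) ⁻¹' A ∩ T (((a : ℤ) * n + d).toNat) ⁻¹' A) := by
  have hT : IsMultiplicativeSystem μ T := ⟨hmp, hmul⟩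
  intro N
  rcases lt_trichotomy b d with hlt | rfl | hgt
  · exact hT.exists_progression_of_lt hA hApos ha hgcd (hbd.resolve_left hlt.ne) hlt N
  · exact hT.exists_progression_of_eq hA hApos ha b N
  · have hgcd' : Int.gcd (Int.gcd (a : ℤ) d : ℤ) b = 1 := by
      rwa [Int.gcd_assoc, Int.gcd_comm d, ← Int.gcd_assoc]
    obtain ⟨n, hNn, hd, hb, hpos⟩ := hT.exists_progression_of_lt hA hApos ha hgcd'
      (mul_comm b d ▸ hbd.resolve_left hgt.ne') hgt N
    exact ⟨n, hNn, hb, hd, by rwa [Set.inter_comm]⟩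

theorem stmt6 {X : Type*} [MeasurableSpace X] (μ : Measure X)
    [IsProbabilityMeasure μ] (T : ℕ → X → X)
    (hmp : ∀ n : ℕ, 1 ≤ n → MeasurePreserving (T n) μ μ)
    (hmul : ∀ m n : ℕ, 1 ≤ m → 1 ≤ n → ∀ᵐ x ∂μ, T n (T m x) = T (n * m) x)
    (hfg : {S : X → X | ∃ p : ℕ, p.Prime ∧ T p = S}.Finite)
    (a : ℕ) (ha : 1 ≤ a) (b d : ℤ)
    (hgcd : Int.gcd (Int.gcd (a : ℤ) b : ℤ) d = 1)
    (hbd : b = d ∨ (a : ℤ) ∣ b * d)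
    (A : Set X) (hA : MeasurableSet A) (hApos : 0 < μ A) :
    ∀ N : ℕ, ∃ n, N ≤ n ∧ 0 < (a : ℤ) * n + b ∧ 0 < (a : ℤ) * n + d ∧
      0 < μ (T (((a : ℤ) * n + b).toNat) ⁻¹' A ∩ T (((a : ℤ) * n + d).toNat) ⁻¹' A) :=
  stmt6_general μ T hmp hmul a ha b d hgcd hbd A hA hApos
end

section
/- Let (p_n)_{n∈ℕ} and (q_n)_{n∈ℕ} be sequences of positive integers. Suppose that for every probability space (X, 𝒳, μ), every family of measure-preserving transformations T_m : X → X (m ∈ ℕ) satisfying T_m ∘ T_k = T_{mk} μ-almost everywhere for all m, k, and every A ∈ 𝒳 with μ(A) > 0, there exist infinitely many n ∈ ℕ with μ(T_{p_n}^{-1}A ∩ T_{q_n}^{-1}A) > 0. Then for every f ∈ 𝓜, liminf_{n→∞} |f(p_n) − f(q_n)| = 0. -/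
/-!
Rotations `x ↦ g k * x` of a compact group by a multiplicative sequence `g` form a multiplicative
measure-preserving system for Haar measure. Recurrence of a small open neighbourhood `U` of the
identity along `(p n, q n)` gives points `x` with `g (p n) * x, g (q n) * x ∈ U`, hence
`g (p n) / g (q n) ∈ U / U`, so `1` is a cluster point of `g (p n) / g (q n)`. For `f ∈ 𝓜`,
`g = f` viewed as a map into the circle, this is `liminf |f (p n) - f (q n)| = 0`.
-/

open MeasureTheory

open Filter Topology

def IsMultiplicativelyRecurrent (p q : ℕ → ℕ) : Prop :=
  ∀ (Y : Type) (_ : MeasurableSpace Y) (μ : Measure Y),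
    IsProbabilityMeasure μ →
    ∀ T : ℕ → Y → Y,
      (∀ k : ℕ, 1 ≤ k → MeasurePreserving (T k) μ μ) →
      (∀ m k : ℕ, 1 ≤ m → 1 ≤ k → ∀ᵐ x ∂μ, T m (T k x) = T (m * k) x) →
      ∀ A : Set Y, MeasurableSet A → 0 < μ A →
        ∀ N : ℕ, ∃ n, N ≤ n ∧ 0 < μ (T (p n) ⁻¹' A ∩ T (q n) ⁻¹' A)

theorem IsMultiplicativelyRecurrent.mapClusterPt_one_div {p q : ℕ → ℕ}
    (hpq : IsMultiplicativelyRecurrent p q) {G : Type} [Group G] [TopologicalSpace G]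
    [IsTopologicalGroup G] [MeasurableSpace G] [OpensMeasurableSpace G] [MeasurableMul G]
    (μ : Measure G) [IsProbabilityMeasure μ] [μ.IsMulLeftInvariant] [μ.IsOpenPosMeasure] {g : ℕ → G}
    (hg : ∀ m k, 1 ≤ m → 1 ≤ k → g (m * k) = g m * g k) :
    MapClusterPt 1 atTop fun n ↦ g (p n) / g (q n) := by
  refine mapClusterPt_iff_frequently.2 fun s hs ↦ frequently_atTop.2 fun N ↦ ?_
  obtain ⟨V, hV, hVs⟩ := exists_nhds_split_inv hs
  have hrot : ∀ m k, 1 ≤ m → 1 ≤ k → ∀ᵐ x ∂μ, g m * (g k * x) = g (m * k) * x :=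
    fun m k hm hk ↦ .of_forall fun x ↦ by rw [hg m k hm hk, mul_assoc]
  obtain ⟨n, hn, hpos⟩ := hpq G _ μ inferInstance (fun k x ↦ g k * x)
    (fun k _ ↦ measurePreserving_mul_left μ (g k)) hrot (interior V)
    isOpen_interior.measurableSet (μ.measure_pos_of_mem_nhds (interior_mem_nhds.2 hV)) N
  obtain ⟨x, hpx, hqx⟩ := nonempty_of_measure_ne_zero hpos.ne'
  refine ⟨n, hn, ?_⟩
  rw [← mul_div_mul_right_eq_div _ _ x]
  exact hVs _ (interior_subset hpx) _ (interior_subset hqx)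

instance isProbabilityMeasure_haarMeasure_top {G : Type*} [Group G] [TopologicalSpace G]
    [IsTopologicalGroup G] [CompactSpace G] [MeasurableSpace G] [BorelSpace G] :
    IsProbabilityMeasure (Measure.haarMeasure (⊤ : TopologicalSpace.PositiveCompacts G)) :=
  ⟨by simpa using Measure.haarMeasure_self (K₀ := (⊤ : TopologicalSpace.PositiveCompacts G))⟩

theorem Circle.dist_div_one (a b : Circle) : dist (a / b) 1 = ‖(a : ℂ) - b‖ := by
  change dist ((a / b : Circle) : ℂ) ((1 : Circle) : ℂ) = _
  rw [Circle.coe_div, Circle.coe_one, dist_eq_norm, div_sub_one b.coe_ne_zero,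
    norm_div, b.norm_coe, div_one]

namespace IsUnitCM

variable {f : ℕ → ℂ} (hf : IsUnitCM f)

noncomputable def toCircle (k : ℕ) : Circle :=
  if h : 1 ≤ k then ⟨f k, mem_sphere_zero_iff_norm.2 (hf.2.2 k h)⟩ else 1

theorem coe_toCircle {k : ℕ} (hk : 1 ≤ k) : (hf.toCircle k : ℂ) = f k := by
  simp [toCircle, hk]

theorem toCircle_mul {m k : ℕ} (hm : 1 ≤ m) (hk : 1 ≤ k) :
    hf.toCircle (m * k) = hf.toCircle m * hf.toCircle k := by
  ext
  rw [Circle.coe_mul, coe_toCircle hf hm, coe_toCircle hf hk,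
    coe_toCircle hf (Nat.one_le_iff_ne_zero.2 (by positivity)), hf.2.1 m k hm hk]

end IsUnitCM

theorem stmt8 (p q : ℕ → ℕ) (hp : ∀ n, 1 ≤ p n) (hq : ∀ n, 1 ≤ q n)
    (hrec : ∀ (Y : Type) (_ : MeasurableSpace Y) (μ : Measure Y),
      IsProbabilityMeasure μ →
      ∀ T : ℕ → Y → Y,
        (∀ k : ℕ, 1 ≤ k → MeasurePreserving (T k) μ μ) →
        (∀ m k : ℕ, 1 ≤ m → 1 ≤ k → ∀ᵐ x ∂μ, T m (T k x) = T (m * k) x) →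
        ∀ A : Set Y, MeasurableSet A → 0 < μ A →
          ∀ N : ℕ, ∃ n, N ≤ n ∧ 0 < μ (T (p n) ⁻¹' A ∩ T (q n) ⁻¹' A))
    (f : ℕ → ℂ) (hf : IsUnitCM f) :
    ∀ ε : ℝ, 0 < ε → ∀ N : ℕ, ∃ n, N ≤ n ∧
      ‖f (p n) - f (q n)‖ < ε := by
  intro ε hε N
  borelize Circle
  have hcluster := IsMultiplicativelyRecurrent.mapClusterPt_one_div hrec
    (Measure.haarMeasure ⊤) fun _ _ ↦ hf.toCircle_mul
  obtain ⟨n, hn, hclose⟩ := frequently_atTop.1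
    (mapClusterPt_iff_frequently.1 hcluster _ (Metric.ball_mem_nhds 1 hε)) N
  refine ⟨n, hn, ?_⟩
  rwa [Metric.mem_ball, Circle.dist_div_one, hf.coe_toCircle (hp n), hf.coe_toCircle (hq n)]
    at hclose
end

section
/- For every positive integer ℓ and every complex number a with |a| = 1, there exists j ∈ {0, 1, …, ℓ−1} such that |a − e(j/ℓ)| ≤ (π/(2ℓ))·|a^ℓ − 1|. -/
/-!
Write `a = exp (θ i)` and `ℓ θ = φ + 2π m` with `φ ∈ (-π, π]`. Then `a ^ ℓ` is at arc distance `|φ|`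
from `1`, while `a` is at arc distance `|φ| / ℓ` from the `ℓ`-th root of unity `exp (2π i m / ℓ)`.
Since chord length is at most arc length, and arc length at most `π / 2` times chord length, the
bound follows.
-/

open Complex InnerProductGeometry
open scoped Real

namespace Complex

lemma exp_two_pi_mul_I_mul_emod_div (m : ℤ) (ℓ : ℕ) (hℓ : ℓ ≠ 0) :
    exp (2 * π * I * (((m % ℓ).toNat : ℂ) / ℓ)) = exp (((2 * π * m / ℓ : ℝ) : ℂ) * I) := by
  have hmod : (((m % ℓ).toNat : ℕ) : ℂ) = m - ℓ * ((m / ℓ : ℤ) : ℂ) := by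
    have : (((m % ℓ).toNat : ℕ) : ℤ) = m - ℓ * (m / ℓ) := by
      rw [Int.toNat_of_nonneg (Int.emod_nonneg m (by omega)), Int.emod_def]
    exact_mod_cast congrArg (Int.cast : ℤ → ℂ) this
  have hsplit : 2 * π * I * (((m % ℓ).toNat : ℂ) / ℓ) =
      ((2 * π * m / ℓ : ℝ) : ℂ) * I + ((-(m / ℓ) : ℤ) : ℂ) * (2 * π * I) := by
    rw [hmod]
    push_cast
    field_simp
    ring
  rw [hsplit, exp_add, exp_int_mul_two_pi_mul_I, mul_one]

lemma exists_natCast_mul_angle_exp_le_angle_pow {a : ℂ} (ha : ‖a‖ = 1) {ℓ : ℕ} (hℓ : ℓ ≠ 0) :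
    ∃ j < ℓ, ℓ * angle a (exp (2 * π * I * (j / ℓ))) ≤ angle (a ^ ℓ) 1 := by
  obtain ⟨θ, rfl⟩ := (norm_eq_one_iff a).1 ha
  have hℓR : (1 : ℝ) ≤ ℓ := by exact_mod_cast Nat.one_le_iff_ne_zero.2 hℓ
  set m := toIocDiv Real.two_pi_pos (-π) (ℓ * θ)
  set φ := toIocMod Real.two_pi_pos (-π) (ℓ * θ)
  have hdecomp : φ + m • (2 * π) = ℓ * θ := toIocMod_add_toIocDiv_zsmul _ _ _
  have hφ : φ ∈ Set.Ioc (-π) (-π + 2 * π) := toIocMod_mem_Ioc _ _ _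
  have hm : m % ℓ < ℓ := Int.emod_lt_of_pos m (by omega)
  refine ⟨(m % ℓ).toNat, by omega, ?_⟩
  have hpow : exp (θ * I) ^ ℓ = exp ((ℓ * θ : ℝ) * I) := by
    rw [← exp_nat_mul]; push_cast; ring_nf
  rw [exp_two_pi_mul_I_mul_emod_div m ℓ hℓ, angle_exp_exp, hpow, angle_exp_one]
  have hshift : θ - 2 * π * m / ℓ = φ / ℓ := by
    rw [zsmul_eq_mul] at hdecomp
    field_simp
    linear_combination (-1 : ℝ) * hdecomp
  have hsmall : φ / ℓ ∈ Set.Ioc (-π) (-π + 2 * π) := by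
    obtain ⟨hlo, hhi⟩ := hφ
    constructor
    · rw [lt_div_iff₀ (by positivity)]; nlinarith [Real.pi_pos]
    · rw [div_le_iff₀ (by positivity)]; nlinarith [Real.pi_pos]
  rw [hshift, (toIocMod_eq_self _).2 hsmall, abs_div, Nat.abs_cast,
    mul_div_cancel₀ _ (by positivity)]

end Complex

theorem stmt12 (ℓ : ℕ) (hℓ : 1 ≤ ℓ) (a : ℂ) (ha : ‖a‖ = 1) :
    ∃ j : ℕ, j < ℓ ∧
      ‖(a - Complex.exp (2 * Real.pi * Complex.I * ((j : ℂ) / (ℓ : ℂ))))‖ ≤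
        Real.pi / (2 * ℓ) * ‖(a ^ ℓ - 1)‖ := by
  obtain ⟨j, hj, hangle⟩ := exists_natCast_mul_angle_exp_le_angle_pow ha (ℓ := ℓ) (by omega)
  refine ⟨j, hj, ?_⟩
  have hℓR : (0 : ℝ) < ℓ := by exact_mod_cast hℓ
  have hroot : ‖exp (2 * π * I * (j / ℓ))‖ = 1 := by
    rw [show 2 * π * I * (j / ℓ) = ((2 * π * j / ℓ : ℝ) : ℂ) * I by push_cast; ring]
    exact norm_exp_ofReal_mul_I _
  calc ‖a - exp (2 * π * I * (j / ℓ))‖ ≤ angle a (exp (2 * π * I * (j / ℓ))) :=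
        norm_sub_le_angle ha hroot
    _ ≤ angle (a ^ ℓ) 1 / ℓ := by rw [le_div_iff₀ hℓR]; linarith
    _ ≤ π / 2 * ‖a ^ ℓ - 1‖ / ℓ := by
        gcongr
        exact angle_le_mul_norm_sub (by rw [norm_pow, ha, one_pow]) norm_one
    _ = π / (2 * ℓ) * ‖a ^ ℓ - 1‖ := by ring
end

section
/- Let p, q be positive integers and let f : ℕ → ℂ be a multiplicative function with |f(n)| ≤ 1 for all n, such that both f^p and f^q are pretentious. Then f^d is pretentious, where d = gcd(p,q). -/
/-- The square of the pretentious distance `𝔻(f,g;1,X)²`. -/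
noncomputable def pretDistSq (f g : ℕ → ℂ) (X : ℕ) : ℝ :=
  ∑ p ∈ (Finset.Icc 1 X).filter Nat.Prime,
    (1 - (f p * (starRingEnd ℂ) (g p)).re) / p

/-- The archimedean twist `n ↦ χ(n) n^{it}` of a Dirichlet character. -/
noncomputable def charTwist {q : ℕ} (χ : DirichletCharacter ℂ q) (t : ℝ) : ℕ → ℂ :=
  fun n => χ (n : ZMod q) * Complex.exp (Complex.I * t * Real.log n)

/-- `f` is pretentious: `𝔻(f(n), χ(n) n^{it}) < ∞` for some Dirichlet character `χ`
and real `t`.  Since the partial sums defining the distance are nondecreasing with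
nonnegative terms, finiteness of the limit is equivalent to boundedness. -/
def Pretentious (f : ℕ → ℂ) : Prop :=
  ∃ q : ℕ, 1 ≤ q ∧ ∃ (χ : DirichletCharacter ℂ q) (t : ℝ) (C : ℝ),
    ∀ X : ℕ, pretDistSq f (charTwist χ t) X ≤ C

/-!
Write `gcd p q = u p - v q` with `u, v ≥ 0`. If `f ^ p` pretends to be `χ₁(n) n^{it₁}` and
`f ^ q` to be `χ₂(n) n^{it₂}`, then `f ^ gcd p q` pretends to be `χ₁^u χ̄₂^v (n) n^{i(ut₁ - vt₂)}`.
Indeed, at a prime `r ∤ q₁ q₂` put `z₁ = f(r)^p χ̄₁(r) r^{-it₁}`, `z₂ = f(r)^q χ̄₂(r) r^{-it₂}` and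
let `w` be the corresponding term for `gcd p q`; then `z₁^u z̄₂^v = |f(r)|^{2vq} w`. On the unit disc
`1 - Re (z w) ≤ 2 (1 - Re z) + 2 (1 - Re w)`, and `1 - |f(r)|^{2vq} ≤ 2vq (1 - Re z₁)`, so
`1 - Re w ≪ (1 - Re z₁) + (1 - Re z₂)`. The primes dividing `q₁ q₂` contribute `O(q₁ q₂)`.
-/

open ComplexConjugate

section UnitDisc

variable {z w : ℂ}

lemma neg_one_le_re (hz : ‖z‖ ≤ 1) : -1 ≤ z.re :=
  (abs_le.mp ((Complex.abs_re_le_norm z).trans hz)).1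

lemma one_sub_re_nonneg (hz : ‖z‖ ≤ 1) : 0 ≤ 1 - z.re :=
  sub_nonneg.mpr ((Complex.re_le_norm z).trans hz)

lemma normSq_le_one (hz : ‖z‖ ≤ 1) : Complex.normSq z ≤ 1 := by
  rw [Complex.normSq_eq_norm_sq]
  exact pow_le_one₀ (norm_nonneg z) hz

lemma norm_pow_le_one (hz : ‖z‖ ≤ 1) (k : ℕ) : ‖z ^ k‖ ≤ 1 := by
  rw [norm_pow]
  exact pow_le_one₀ (norm_nonneg z) hz

lemma norm_pow_mul_conj_le_one (hz : ‖z‖ ≤ 1) (hw : ‖w‖ ≤ 1) (k : ℕ) :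
    ‖z ^ k * conj w‖ ≤ 1 := by
  rw [norm_mul, Complex.norm_conj]
  exact mul_le_one₀ (norm_pow_le_one hz k) (norm_nonneg _) hw

/-- A weak form of the triangle inequality for the pretentious distance. -/
lemma one_sub_re_mul_le (hz : ‖z‖ ≤ 1) (hw : ‖w‖ ≤ 1) :
    1 - (z * w).re ≤ 2 * (1 - z.re) + 2 * (1 - w.re) := by
  have hz2 := normSq_le_one hz
  have hw2 := normSq_le_one hw
  rw [Complex.normSq_apply] at hz2 hw2
  rw [Complex.mul_re]
  nlinarith [sq_nonneg (z.im - w.im), sq_nonneg (z.re - w.re), sq_nonneg (z.re + w.re),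
    sq_nonneg (1 - z.re), sq_nonneg (1 - w.re)]

lemma one_sub_re_pow_le (hz : ‖z‖ ≤ 1) (k : ℕ) : 1 - (z ^ k).re ≤ 4 ^ k * (1 - z.re) := by
  induction k with
  | zero => simpa using one_sub_re_nonneg hz
  | succ k ih =>
    have h4 : (1 : ℝ) ≤ 4 ^ k := one_le_pow₀ (by norm_num)
    have := one_sub_re_nonneg hz
    calc 1 - (z ^ (k + 1)).re ≤ 2 * (1 - (z ^ k).re) + 2 * (1 - z.re) := by
          rw [pow_succ]; exact one_sub_re_mul_le (norm_pow_le_one hz k) hz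
      _ ≤ 4 ^ (k + 1) * (1 - z.re) := by rw [pow_succ]; nlinarith

lemma one_sub_re_le_of_pow_mul_pow_eq {z₁ z₂ : ℂ} {s : ℝ} {u v : ℕ} (hz₁ : ‖z₁‖ ≤ 1)
    (hz₂ : ‖z₂‖ ≤ 1) (hw : ‖w‖ ≤ 1) (hs : s ≤ 1) (h : z₁ ^ u * z₂ ^ v = s * w) :
    1 - w.re ≤ 2 * 4 ^ u * (1 - z₁.re) + 2 * 4 ^ v * (1 - z₂.re) + (1 - s) := by
  have hprod := one_sub_re_mul_le (norm_pow_le_one hz₁ u) (norm_pow_le_one hz₂ v)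
  rw [h, Complex.re_ofReal_mul] at hprod
  have h₁ := one_sub_re_pow_le hz₁ u
  have h₂ := one_sub_re_pow_le hz₂ v
  nlinarith [neg_one_le_re hw]

lemma one_sub_normSq_pow_le {p : ℕ} (hz : ‖z‖ ≤ 1) (hw : ‖w‖ ≤ 1) (hp : p ≠ 0)
    (k : ℕ) : 1 - Complex.normSq z ^ k ≤ 2 * k * (1 - (z ^ p * w).re) := by
  have hbern := one_add_mul_sub_le_pow (by linarith [Complex.normSq_nonneg z] :
    -1 ≤ Complex.normSq z) k
  have hab : (z ^ p * w).re ≤ ‖z‖ := calc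
    (z ^ p * w).re ≤ ‖z ^ p * w‖ := Complex.re_le_norm _
    _ ≤ ‖z‖ ^ p := by
      rw [norm_mul, norm_pow]; exact mul_le_of_le_one_right (by positivity) hw
    _ ≤ ‖z‖ := pow_le_of_le_one (norm_nonneg z) hz hp
  have hsq : 1 - Complex.normSq z ≤ 2 * (1 - (z ^ p * w).re) := by
    rw [Complex.normSq_eq_norm_sq]; nlinarith [norm_nonneg z]
  have hk : (0 : ℝ) ≤ k := k.cast_nonneg
  nlinarith

end UnitDisc

lemma pow_mul_conj_pow_eq {a b c : ℂ} {p q d u v : ℕ} (h : u * p = d + v * q) :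
    (a ^ p * conj b) ^ u * conj (a ^ q * conj c) ^ v =
      (Complex.normSq a ^ (v * q) : ℝ) * (a ^ d * conj (b ^ u * conj c ^ v)) := by
  have hpow : a ^ (p * u) * conj a ^ (q * v) = (Complex.normSq a ^ (v * q) : ℝ) * a ^ d := by
    rw [mul_comm p u, h, mul_comm q v, pow_add, mul_assoc, ← mul_pow, Complex.mul_conj]
    push_cast; ring
  simp only [map_mul, map_pow, Complex.conj_conj]
  linear_combination (conj b ^ u * c ^ v) * hpow

lemma one_sub_re_pow_mul_conj_le {a b c : ℂ} {p q d u v : ℕ} (ha : ‖a‖ ≤ 1) (hb : ‖b‖ ≤ 1)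
    (hc : ‖c‖ ≤ 1) (hp : p ≠ 0) (h : u * p = d + v * q) :
    1 - (a ^ d * conj (b ^ u * conj c ^ v)).re ≤ (2 * 4 ^ u + 2 * 4 ^ v + 2 * (v * q)) *
      ((1 - (a ^ p * conj b).re) + (1 - (a ^ q * conj c).re)) := by
  have hz₁ := norm_pow_mul_conj_le_one ha hb p
  have hz₂ := norm_pow_mul_conj_le_one ha hc q
  have hw : ‖a ^ d * conj (b ^ u * conj c ^ v)‖ ≤ 1 := by
    refine norm_pow_mul_conj_le_one ha ?_ d
    rw [norm_mul, ← map_pow, Complex.norm_conj]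
    exact mul_le_one₀ (norm_pow_le_one hb u) (norm_nonneg _) (norm_pow_le_one hc v)
  have hmain := one_sub_re_le_of_pow_mul_pow_eq hz₁ (by rwa [Complex.norm_conj]) hw
    (pow_le_one₀ (Complex.normSq_nonneg a) (normSq_le_one ha)) (pow_mul_conj_pow_eq h)
  have hs := one_sub_normSq_pow_le (w := conj b) ha (by rwa [Complex.norm_conj]) hp (v * q)
  rw [Complex.conj_re] at hmain
  have hx := one_sub_re_nonneg hz₁
  have hy := one_sub_re_nonneg hz₂
  push_cast at hs
  nlinarith [mul_nonneg (pow_nonneg zero_le_four v) hx, mul_nonneg (pow_nonneg zero_le_four u) hy,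
    mul_nonneg (mul_nonneg v.cast_nonneg q.cast_nonneg) hy]

section Twists

variable {q : ℕ}

lemma norm_charTwist_le_one (χ : DirichletCharacter ℂ q) (t : ℝ) (n : ℕ) :
    ‖charTwist χ t n‖ ≤ 1 := by
  rw [charTwist, norm_mul, mul_assoc, ← Complex.ofReal_mul, Complex.norm_exp_I_mul_ofReal,
    mul_one]
  exact χ.norm_le_one _

lemma charTwist_mul (χ ψ : DirichletCharacter ℂ q) (t s : ℝ) (n : ℕ) :
    charTwist (χ * ψ) (t + s) n = charTwist χ t n * charTwist ψ s n := by
  simp only [charTwist, MulChar.coeToFun_mul, Pi.mul_apply, Complex.ofReal_add]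
  rw [mul_add, add_mul, Complex.exp_add]
  ring

lemma charTwist_pow (χ : DirichletCharacter ℂ q) (t : ℝ) (k : ℕ) {n : ℕ}
    (hn : IsUnit (n : ZMod q)) : charTwist (χ ^ k) (k * t) n = charTwist χ t n ^ k := by
  obtain ⟨x, hx⟩ := hn
  simp only [charTwist, ← hx, MulChar.pow_apply_coe, mul_pow, ← Complex.exp_nat_mul]
  push_cast
  ring_nf

lemma charTwist_conj (χ : DirichletCharacter ℂ q) (t : ℝ) (n : ℕ) :
    charTwist (χ.ringHomComp (starRingEnd ℂ)) (-t) n = conj (charTwist χ t n) := by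
  simp only [charTwist, MulChar.ringHomComp_apply, map_mul, ← Complex.exp_conj, Complex.conj_I,
    Complex.conj_ofReal, Complex.ofReal_neg]
  ring_nf

lemma charTwist_changeLevel {m : ℕ} (h : q ∣ m) (χ : DirichletCharacter ℂ q) (t : ℝ) {n : ℕ}
    (hn : n.Coprime m) : charTwist (DirichletCharacter.changeLevel h χ) t n = charTwist χ t n := by
  have := DirichletCharacter.changeLevel_eq_cast_of_dvd' χ h
    (a := n) (Nat.isCoprime_iff_coprime.mpr hn)
  simp only [Int.cast_natCast] at this
  simp only [charTwist, this]

end Twists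

lemma exists_mul_eq_gcd_add_mul {p : ℕ} (q : ℕ) (hp : 0 < p) :
    ∃ u v : ℕ, u * p = Nat.gcd p q + v * q := by
  rcases q.eq_zero_or_pos with rfl | hq
  · exact ⟨1, 0, by simp⟩
  -- shift the Bézout coefficients `(a, b)` by `k • (q, p)` until both are nonnegative
  set a := p.gcdA q
  set b := p.gcdB q
  set k := |a| + |b|
  have hk0 : 0 ≤ k := by positivity
  have hu : 0 ≤ a + k * q := by
    have : k ≤ k * q := le_mul_of_one_le_right hk0 (by exact_mod_cast hq)
    linarith [neg_abs_le a, abs_nonneg b]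
  have hv : 0 ≤ k * p - b := by
    have : k ≤ k * p := le_mul_of_one_le_right hk0 (by exact_mod_cast hp)
    linarith [le_abs_self b, abs_nonneg a]
  refine ⟨(a + k * q).toNat, (k * p - b).toNat, ?_⟩
  zify
  rw [Int.toNat_of_nonneg hu, Int.toNat_of_nonneg hv, Nat.gcd_eq_gcd_ab]
  ring

lemma pretDistSq_le_of_forall_coprime {f g f₁ g₁ f₂ g₂ : ℕ → ℂ} {M : ℕ} {K : ℝ} (hM : M ≠ 0)
    (hK : 0 ≤ K) (hfg : ∀ n, ‖f n * conj (g n)‖ ≤ 1) (hfg₁ : ∀ n, ‖f₁ n * conj (g₁ n)‖ ≤ 1)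
    (hfg₂ : ∀ n, ‖f₂ n * conj (g₂ n)‖ ≤ 1)
    (h : ∀ r, r.Prime → r.Coprime M → 1 - (f r * conj (g r)).re ≤
      K * ((1 - (f₁ r * conj (g₁ r)).re) + (1 - (f₂ r * conj (g₂ r)).re))) (X : ℕ) :
    pretDistSq f g X ≤ K * (pretDistSq f₁ g₁ X + pretDistSq f₂ g₂ X) + 2 * M := by
  set S := (Finset.Icc 1 X).filter Nat.Prime
  have hterm : ∀ r ∈ S, (1 - (f r * conj (g r)).re) / r ≤
      K * ((1 - (f₁ r * conj (g₁ r)).re) / r + (1 - (f₂ r * conj (g₂ r)).re) / r) +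
        if r ∣ M then 2 else 0 := by
    intro r hr
    have hr : r.Prime := (Finset.mem_filter.mp hr).2
    have hr1 : (1 : ℝ) ≤ r := by exact_mod_cast hr.one_lt.le
    rw [← add_div, mul_div_assoc']
    split_ifs with hdvd
    · have hrhs : 0 ≤ K * ((1 - (f₁ r * conj (g₁ r)).re) + (1 - (f₂ r * conj (g₂ r)).re)) :=
        mul_nonneg hK (add_nonneg (one_sub_re_nonneg (hfg₁ r)) (one_sub_re_nonneg (hfg₂ r)))
      have hlhs : (1 - (f r * conj (g r)).re) / r ≤ 2 := by
        rw [div_le_iff₀ (by positivity)]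
        nlinarith [neg_one_le_re (hfg r)]
      linarith [div_nonneg hrhs (by positivity : (0 : ℝ) ≤ r)]
    · rw [add_zero]
      exact div_le_div_of_nonneg_right (h r hr ((hr.coprime_iff_not_dvd).mpr hdvd)) (by positivity)
  have hcard : (S.filter (· ∣ M)).card ≤ M := calc
    (S.filter (· ∣ M)).card ≤ M.divisors.card :=
      Finset.card_le_card fun r hr => Nat.mem_divisors.mpr ⟨(Finset.mem_filter.mp hr).2, hM⟩
    _ ≤ M := Nat.card_divisors_le_self M
  calc pretDistSq f g X ≤ ∑ r ∈ S, (K * ((1 - (f₁ r * conj (g₁ r)).re) / r +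
        (1 - (f₂ r * conj (g₂ r)).re) / r) + if r ∣ M then 2 else 0) := Finset.sum_le_sum hterm
    _ = K * (pretDistSq f₁ g₁ X + pretDistSq f₂ g₂ X) + 2 * (S.filter (· ∣ M)).card := by
      rw [Finset.sum_add_distrib, ← Finset.mul_sum, Finset.sum_add_distrib, ← Finset.sum_filter,
        Finset.sum_const, nsmul_eq_mul, mul_comm (2 : ℝ)]
      rfl
    _ ≤ K * (pretDistSq f₁ g₁ X + pretDistSq f₂ g₂ X) + 2 * M := by gcongr

theorem stmt13_general (p q : ℕ) (hp : 1 ≤ p) (f : ℕ → ℂ)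
    (hbdd : ∀ n : ℕ, ‖f n‖ ≤ 1)
    (hfp : Pretentious (fun n => f n ^ p)) (hfq : Pretentious (fun n => f n ^ q)) :
    Pretentious (fun n => f n ^ Nat.gcd p q) := by
  obtain ⟨q₁, hq₁, χ₁, t₁, C₁, hC₁⟩ := hfp
  obtain ⟨q₂, hq₂, χ₂, t₂, C₂, hC₂⟩ := hfq
  obtain ⟨u, v, huv⟩ := exists_mul_eq_gcd_add_mul q hp
  have hM : q₁ * q₂ ≠ 0 := (Nat.mul_pos hq₁ hq₂).ne'
  set K : ℝ := 2 * 4 ^ u + 2 * 4 ^ v + 2 * (v * q)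
  have hK : 0 ≤ K := by positivity
  refine ⟨q₁ * q₂, Nat.one_le_iff_ne_zero.mpr hM,
    (χ₁.changeLevel (dvd_mul_right q₁ q₂)) ^ u *
      ((χ₂.changeLevel (dvd_mul_left q₂ q₁)).ringHomComp (starRingEnd ℂ)) ^ v,
    u * t₁ + v * -t₂, K * (C₁ + C₂) + 2 * (q₁ * q₂ : ℕ), fun X => ?_⟩
  have hnorm : ∀ {q} (χ : DirichletCharacter ℂ q) t k n,
      ‖f n ^ k * conj (charTwist χ t n)‖ ≤ 1 :=
    fun χ t k n => norm_pow_mul_conj_le_one (hbdd n) (norm_charTwist_le_one χ t n) k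
  refine (pretDistSq_le_of_forall_coprime hM hK (hnorm _ _ _) (hnorm _ _ _)
    (hnorm _ _ _) (fun r _ hr => ?_) X).trans (by gcongr; exacts [hC₁ X, hC₂ X])
  have hunit := (ZMod.isUnit_iff_coprime r (q₁ * q₂)).mpr hr
  rw [charTwist_mul, charTwist_pow _ _ _ hunit, charTwist_pow _ _ _ hunit, charTwist_conj,
    charTwist_changeLevel _ _ _ hr, charTwist_changeLevel _ _ _ hr]
  exact one_sub_re_pow_mul_conj_le (hbdd r) (norm_charTwist_le_one _ _ _)
    (norm_charTwist_le_one _ _ _) (by omega) huv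

theorem stmt13 (p q : ℕ) (hp : 1 ≤ p) (hq : 1 ≤ q) (f : ℕ → ℂ)
    (hmul : f 1 = 1 ∧ ∀ m n : ℕ, 1 ≤ m → 1 ≤ n → Nat.Coprime m n →
      f (m * n) = f m * f n)
    (hbdd : ∀ n : ℕ, ‖f n‖ ≤ 1)
    (hfp : Pretentious (fun n => f n ^ p)) (hfq : Pretentious (fun n => f n ^ q)) :
    Pretentious (fun n => f n ^ Nat.gcd p q) :=
  stmt13_general p q hp f hbdd hfp hfq
end

section
/- There is an absolute constant c > 0 with the following property: for every completely multiplicative function f : ℕ → ℂ with |f(n)| ≤ 1 for all n, every K ∈ ℕ (K ≥ 1), and every prime p dividing all the elements of Φ_K (i.e., p ∈ {p_1, …, p_K}), one has |(1 − f(p)) · (1/|Φ_K|) Σ_{n ∈ Φ_K} f(n)| ≤ c·2^{−K}. -/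
def IsCM (f : ℕ → ℂ) : Prop :=
  f 1 = 1 ∧ ∀ m n : ℕ, 1 ≤ m → 1 ≤ n → f (m * n) = f m * f n

/-- The multiplicative Følner set
`Φ_K = {p_1^{θ_1} ⋯ p_K^{θ_K} : 2^K < θ_i ≤ 2^{K+1}}`, where `p_1 < ⋯ < p_K`
are the first `K` primes (`Nat.nth Nat.Prime` is 0-indexed). -/
noncomputable def Phi (K : ℕ) : Finset ℕ :=
  Finset.image (fun θ : Fin K → ℕ => ∏ i : Fin K, Nat.nth Nat.Prime i ^ θ i)
    (Fintype.piFinset fun _ : Fin K => Finset.Ioc (2 ^ K) (2 ^ (K + 1)))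

/-! By unique factorisation `θ ↦ ∏ pᵢ ^ θᵢ` is injective, so for completely multiplicative `f`
the sum of `f` over `Φ_K` splits into the product over `i` of the geometric sums
`∑_{2^K < θ ≤ 2^{K+1}} f(pᵢ)^θ`, each of modulus at most `2^K = |Φ_K|^{1/K}`. For `p = pⱼ` the
factor `1 - f(p)` telescopes the `j`-th geometric sum to `f(p)^{2^K+1} - f(p)^{2^{K+1}+1}`, of
modulus at most `2`; this saves a factor `2^K`. -/

namespace IsCM

variable {f : ℕ → ℂ}

theorem map_pow (hf : IsCM f) {n : ℕ} (hn : 0 < n) (k : ℕ) : f (n ^ k) = f n ^ k := by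
  induction k with
  | zero => simpa using hf.1
  | succ k ih => rw [pow_succ, pow_succ, hf.2 _ _ (Nat.one_le_pow _ _ hn) hn, ih]

theorem map_prod (hf : IsCM f) {ι : Type*} (s : Finset ι) (g : ι → ℕ) (hg : ∀ i ∈ s, 0 < g i) :
    f (∏ i ∈ s, g i) = ∏ i ∈ s, f (g i) := by
  induction s using Finset.cons_induction with
  | empty => simpa using hf.1
  | cons a s ha ih =>
    rw [Finset.forall_mem_cons] at hg
    rw [Finset.prod_cons, Finset.prod_cons, hf.2 _ _ hg.1 (Finset.prod_pos hg.2), ih hg.2]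

end IsCM

theorem Nat.factorization_prod_nth_prime_pow {K : ℕ} (θ : Fin K → ℕ) (j : Fin K) :
    (∏ i : Fin K, nth Nat.Prime i ^ θ i).factorization (nth Nat.Prime j) = θ j := by
  rw [factorization_prod (S := Finset.univ) (g := fun i : Fin K => nth Nat.Prime i ^ θ i)
      fun i _ => pow_ne_zero _ (prime_nth_prime i).ne_zero,
    Finset.sum_apply', Finset.sum_eq_single j]
  · simp [(prime_nth_prime j).factorization_pow]
  · intro i _ hij
    rw [(prime_nth_prime i).factorization_pow,
      Finsupp.single_eq_of_ne
        ((nth_injective infinite_setOfPred_prime).ne (Fin.val_injective.ne hij.symm))]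
  · simp

theorem Nat.injective_prod_nth_prime_pow (K : ℕ) :
    Function.Injective fun θ : Fin K → ℕ => ∏ i : Fin K, nth Nat.Prime i ^ θ i :=
  fun θ θ' h => funext fun j => by
    simpa only [factorization_prod_nth_prime_pow] using
      congrArg (fun n => n.factorization (nth Nat.Prime j)) h

theorem card_Phi (K : ℕ) : (Phi K).card = (2 ^ K) ^ K := by
  rw [Phi, Finset.card_image_of_injective _ (Nat.injective_prod_nth_prime_pow K),
    Fintype.card_piFinset]
  simp [Nat.card_Ioc, pow_succ, mul_two]

theorem IsCM.sum_image_prod_nth_prime_pow {f : ℕ → ℂ} (hf : IsCM f) {K : ℕ}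
    (s : Fin K → Finset ℕ) :
    ∑ n ∈ (Fintype.piFinset s).image (fun θ : Fin K → ℕ => ∏ i : Fin K, Nat.nth Nat.Prime i ^ θ i),
      f n = ∏ i : Fin K, ∑ θ ∈ s i, f (Nat.nth Nat.Prime i) ^ θ := by
  rw [Finset.sum_image fun θ _ θ' _ h => Nat.injective_prod_nth_prime_pow K h,
    Finset.prod_univ_sum]
  refine Finset.sum_congr rfl fun θ _ => ?_
  rw [hf.map_prod Finset.univ (fun i : Fin K => Nat.nth Nat.Prime i ^ θ i)
    fun i _ => pow_pos (Nat.prime_nth_prime i).pos _]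
  exact Finset.prod_congr rfl fun i _ => hf.map_pow (Nat.prime_nth_prime i).pos _

theorem one_sub_mul_sum_Ioc_pow {R : Type*} [CommRing R] (x : R) {a b : ℕ} (hab : a ≤ b) :
    (1 - x) * ∑ θ ∈ Finset.Ioc a b, x ^ θ = x ^ (a + 1) - x ^ (b + 1) := by
  rw [mul_comm, ← Finset.Ico_add_one_add_one_eq_Ioc, geom_sum_Ico_mul_neg x (by omega)]

section Norms

variable {R : Type*} [NormedCommRing R] [NormOneClass R]

theorem norm_one_sub_mul_sum_Ioc_pow_le {x : R} (hx : ‖x‖ ≤ 1) {a b : ℕ} (hab : a ≤ b) :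
    ‖(1 - x) * ∑ θ ∈ Finset.Ioc a b, x ^ θ‖ ≤ 2 := by
  have hpow : ∀ n : ℕ, ‖x ^ n‖ ≤ 1 := fun n =>
    (norm_pow_le x n).trans (pow_le_one₀ (norm_nonneg x) hx)
  rw [one_sub_mul_sum_Ioc_pow x hab]
  calc ‖x ^ (a + 1) - x ^ (b + 1)‖ ≤ ‖x ^ (a + 1)‖ + ‖x ^ (b + 1)‖ := norm_sub_le _ _
    _ ≤ 2 := by linarith [hpow (a + 1), hpow (b + 1)]

theorem norm_sum_pow_le_card {x : R} (hx : ‖x‖ ≤ 1) (s : Finset ℕ) :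
    ‖∑ θ ∈ s, x ^ θ‖ ≤ s.card := by
  refine (norm_sum_le _ _).trans ?_
  simpa using Finset.sum_le_card_nsmul s _ 1 fun n _ =>
    (norm_pow_le x n).trans (pow_le_one₀ (norm_nonneg x) hx)

theorem norm_mul_prod_le {ι : Type*} [DecidableEq ι] {s : Finset ι} {j : ι} (hj : j ∈ s)
    (w : R) (S : ι → R) {C a : ℝ} (hC : ‖w * S j‖ ≤ C) (ha : ∀ i ∈ s, ‖S i‖ ≤ a) :
    ‖w * ∏ i ∈ s, S i‖ ≤ C * a ^ (s.card - 1) := by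
  rw [← Finset.mul_prod_erase s S hj, ← mul_assoc, ← Finset.card_erase_of_mem hj,
    ← Finset.prod_const]
  refine (norm_mul_le _ _).trans (mul_le_mul hC ?_ (norm_nonneg _) ((norm_nonneg _).trans hC))
  exact (Finset.norm_prod_le _ _).trans
    (Finset.prod_le_prod (fun _ _ => norm_nonneg _) fun i hi => ha i (Finset.mem_of_mem_erase hi))

end Norms

theorem stmt16 :
    ∃ c : ℝ, 0 < c ∧ ∀ f : ℕ → ℂ, IsCM f → (∀ n : ℕ, ‖f n‖ ≤ 1) →
      ∀ K : ℕ, 1 ≤ K → ∀ p : ℕ, p.Prime → (∃ i : Fin K, p = Nat.nth Nat.Prime i) →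
        ‖(1 - f p) * ((∑ n ∈ Phi K, f n) / ((Phi K).card : ℂ))‖ ≤
          c / 2 ^ K := by
  refine ⟨2, two_pos, fun f hf hf1 K hK p _ ⟨j, hpj⟩ => ?_⟩
  have hab : 2 ^ K ≤ 2 ^ (K + 1) := Nat.pow_le_pow_right two_pos K.le_succ
  have hnum : ‖(1 - f p) * ∑ n ∈ Phi K, f n‖ ≤ 2 * (2 ^ K) ^ (K - 1) := by
    rw [Phi, hf.sum_image_prod_nth_prime_pow, hpj]
    refine (norm_mul_prod_le (a := 2 ^ K) (Finset.mem_univ j) _ _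
      (norm_one_sub_mul_sum_Ioc_pow_le (hf1 _) hab) fun i _ =>
        (norm_sum_pow_le_card (hf1 _) _).trans_eq ?_).trans_eq ?_
    · simp [Nat.card_Ioc, pow_succ, mul_two]
    · simp
  have hcard : ‖((Phi K).card : ℂ)‖ = (2 ^ K) ^ K := by simp [card_Phi]
  rw [mul_div_assoc', norm_div, hcard, div_le_div_iff₀ (by positivity) (by positivity)]
  calc ‖(1 - f p) * ∑ n ∈ Phi K, f n‖ * 2 ^ K ≤ 2 * (2 ^ K) ^ (K - 1) * 2 ^ K := by gcongr
    _ = 2 * (2 ^ K) ^ K := by rw [mul_assoc, ← pow_succ, Nat.sub_add_cancel hK]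
end
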